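/- arXiv:2307.07979 — 4 statements merged into one kernel-verified Lean document; each statement's English description precedes it below -/
import Mathlib

section
/- Let n = 2m with m ≥ 1 an integer. The matrices χ_{ν,i}, for ν = 0,…,n−1 and i = 0,…,i_ν, form a basis of the real vector space 𝔐_n = { A = [a_{r,j}]_{r,j=0}^m : a_{r,j} ∈ ℝ, a_{m,m} = 0 } of (m+1)×(m+1) real matrices whose bottom-right entry vanishes. (Lemma 'basis', even case.) -/
open MeasureTheory Set

noncomputable section

/-- Lebesgue measure restricted to the interval (0,1). -/
def μ01 : Measure ℝ := volume.restrict (Set.Ioo 0 1)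

/-- `f ∈ L¹(0,1)`. -/
def MemL1 (f : ℝ → ℂ) : Prop := MeasureTheory.IntegrableOn f (Set.Ioo 0 1)

/-- `f ∈ L²(0,1)`. -/
def MemL2 (f : ℝ → ℂ) : Prop := MeasureTheory.MemLp f 2 μ01

/-- `f ∈ L^∞(0,1)`. -/
def MemLinf (f : ℝ → ℂ) : Prop := MeasureTheory.MemLp f ⊤ μ01

/-- The L¹(0,1) norm. -/
def L1norm (f : ℝ → ℂ) : ℝ := ∫ x in Set.Ioo (0:ℝ) 1, ‖f x‖

/-- The L²(0,1) norm. -/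
def L2norm (f : ℝ → ℂ) : ℝ := (∫ x in Set.Ioo (0:ℝ) 1, ‖f x‖ ^ 2) ^ ((1:ℝ)/2)

/-- `g` is absolutely continuous on `[0,1]` with a.e. derivative `g'`
(in particular `g' ∈ L¹(0,1)`). -/
def HasACDerivOn01 (g g' : ℝ → ℂ) : Prop :=
  MeasureTheory.IntegrableOn g' (Set.Ioo 0 1) ∧
  ∀ x ∈ Set.Icc (0:ℝ) 1, g x = g 0 + ∫ t in (0:ℝ)..x, g' t

/-- `Dy` is a chain of derivatives of `y` up to order `m`:
`Dy 0 = y` and `Dy k` is absolutely continuous on `[0,1]` with derivative `Dy (k+1)`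
for `k < m`.  In particular `Dy m ∈ L¹(0,1)`, i.e. `y ∈ W¹_m[0,1]`. -/
def DerivChain (m : ℕ) (y : ℝ → ℂ) (Dy : ℕ → ℝ → ℂ) : Prop :=
  Dy 0 = y ∧ ∀ k < m, HasACDerivOn01 (Dy k) (Dy (k+1))

/-- `h` is an `i`-th iterated a.e. derivative of `g` on `[0,1]`
(through absolutely continuous intermediate derivatives). -/
def IterDeriv (i : ℕ) (g h : ℝ → ℂ) : Prop :=
  ∃ G : ℕ → ℝ → ℂ, G 0 = g ∧ (∀ k < i, HasACDerivOn01 (G k) (G (k+1))) ∧ G i = h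

/-- Test functions: smooth, compactly supported inside `(0,1)`. -/
def TestFun (z : ℝ → ℂ) : Prop :=
  ContDiff ℝ (⊤ : ℕ∞) z ∧ tsupport z ⊆ Set.Ioo 0 1

/-- The singularity orders `i_{2k+j} = m - k - j`. -/
def iOrd (m ν : ℕ) : ℕ := m - ν / 2 - ν % 2

/-- The entries of the matrices `χ_{ν,i}` (size `(m+1) × (m+1)`, indices `0,…,m`). -/
def chiN (m ν i r c : ℕ) : ℝ :=
  if r ≤ m ∧ c ≤ m then
    if ν % 2 = 0 then
      if ν / 2 ≤ r ∧ ν / 2 ≤ c ∧ (r - ν / 2) + (c - ν / 2) = i then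
        (Nat.choose i (r - ν / 2) : ℝ)
      else 0
    else
      if ν / 2 ≤ r ∧ ν / 2 ≤ c ∧ (r - ν / 2) + (c - ν / 2) = i + 1 then
        (Nat.choose (i+1) (r - ν / 2) : ℝ)
          - 2 * (if r - ν / 2 = 0 then 0 else (Nat.choose i (r - ν / 2 - 1) : ℝ))
      else 0
  else 0

/-- The matrix `χ_{ν,i}`. -/
def chiM (m ν i : ℕ) : Matrix (Fin (m+1)) (Fin (m+1)) ℝ :=
  Matrix.of fun r c => chiN m ν i (r : ℕ) (c : ℕ)

/-- The space `𝔔_n` for `n = 2m` (indices `0,…,m`; entries outside vanish). -/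
def MemQE (m : ℕ) (Q : ℕ → ℕ → ℝ → ℂ) : Prop :=
  (∀ r j, r < m → j < m → MemL1 (Q r j)) ∧
  (∀ r, r < m → MemL2 (Q r m)) ∧
  (∀ r, r < m → MemL2 (Q m r)) ∧
  Q m m = 0 ∧
  (∀ r j, m < r ∨ m < j → Q r j = 0)

/-- The space `𝔉_n` for `n = 2m` (paper indices `1,…,n`; entries outside vanish). -/
def MemFE (m : ℕ) (F : ℕ → ℕ → ℝ → ℂ) : Prop :=
  (∀ k j, 1 ≤ k → k ≤ 2*m → 1 ≤ j → j ≤ 2*m → MemL1 (F k j)) ∧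
  (∀ j, 1 ≤ j → j ≤ m → MemL2 (F m j)) ∧
  (∀ k, m+1 ≤ k → k ≤ 2*m → MemL2 (F k (m+1))) ∧
  (∀ k j, 1 ≤ k → k ≤ 2*m → 1 ≤ j → j ≤ 2*m →
    (k < m ∨ m+1 < j ∨ (k = m ∧ j = m+1)) → F k j = 0) ∧
  (∀ k j, ¬(1 ≤ k ∧ k ≤ 2*m ∧ 1 ≤ j ∧ j ≤ 2*m) → F k j = 0)

/-- The space `𝔔_n` for `n = 2m+1`. -/
def MemQO (m : ℕ) (Q : ℕ → ℕ → ℝ → ℂ) : Prop :=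
  (∀ r j, r ≤ m → j ≤ m → MemL1 (Q r j)) ∧
  (∀ r j, m < r ∨ m < j → Q r j = 0)

/-- The space `𝔉_n` for `n = 2m+1` (paper indices `1,…,n`). -/
def MemFO (m : ℕ) (F : ℕ → ℕ → ℝ → ℂ) : Prop :=
  (∀ k j, m+1 ≤ k → k ≤ 2*m+1 → 1 ≤ j → j ≤ m+1 → MemL1 (F k j)) ∧
  (∀ k j, 1 ≤ k → k ≤ 2*m+1 → 1 ≤ j → j ≤ 2*m+1 → (k ≤ m ∨ m+1 < j) → F k j = 0) ∧
  (∀ k j, ¬(1 ≤ k ∧ k ≤ 2*m+1 ∧ 1 ≤ j ∧ j ≤ 2*m+1) → F k j = 0)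

/-- The map `𝒮_n`, `n = 2m` (paper indices). -/
def SE (m : ℕ) (Q : ℕ → ℕ → ℝ → ℂ) : ℕ → ℕ → ℝ → ℂ := fun k j =>
  if k = m ∧ 1 ≤ j ∧ j ≤ m then fun x => (-1:ℂ)^(m+1) * Q (j-1) m x
  else if m+1 ≤ k ∧ k ≤ 2*m ∧ j = m+1 then fun x => (-1:ℂ)^(k+1) * Q m (2*m-k) x
  else if m+1 ≤ k ∧ k ≤ 2*m ∧ 1 ≤ j ∧ j ≤ m then
    fun x => (-1:ℂ)^(k+1) * Q (j-1) (2*m-k) x + (-1:ℂ)^(m+k) * (Q (j-1) m x * Q m (2*m-k) x)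
  else 0

/-- The map `𝒮_n⁻¹`, `n = 2m` (indices `0,…,m`). -/
def SinvE (m : ℕ) (F : ℕ → ℕ → ℝ → ℂ) : ℕ → ℕ → ℝ → ℂ := fun r c =>
  if r < m ∧ c = m then fun x => (-1:ℂ)^(m+1) * F m (r+1) x
  else if r = m ∧ c < m then fun x => (-1:ℂ)^(2*m-c+1) * F (2*m-c) (m+1) x
  else if r < m ∧ c < m then
    fun x => (-1:ℂ)^(2*m-c+1) * (F (2*m-c) (r+1) x - F (2*m-c) (m+1) x * F m (r+1) x)
  else 0

/-- The map `𝒮_n`, `n = 2m+1` (paper indices). -/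
def SO (m : ℕ) (Q : ℕ → ℕ → ℝ → ℂ) : ℕ → ℕ → ℝ → ℂ := fun k j =>
  if m+1 ≤ k ∧ k ≤ 2*m+1 ∧ 1 ≤ j ∧ j ≤ m+1 then
    fun x => (-1:ℂ)^k * Q (j-1) (2*m+1-k) x
  else 0

/-- Quasi-derivative chain generated by the matrix `F` (paper indices `1,…,n`):
`Y k = y^{[k]}`, i.e. `Y 0 = y` and for `1 ≤ k ≤ n` the function `y^{[k-1]} = Y (k-1)`
is absolutely continuous on `[0,1]` with a.e. derivative
`Y k + ∑_{j=1}^k F k j • Y (j-1)`. -/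
def QuasiChain (n : ℕ) (F : ℕ → ℕ → ℝ → ℂ) (y : ℝ → ℂ) (Y : ℕ → ℝ → ℂ) : Prop :=
  Y 0 = y ∧ ∀ k, 1 ≤ k → k ≤ n → HasACDerivOn01 (Y (k-1))
    (fun x => Y k x + ∑ j ∈ Finset.Icc 1 k, F k j x * Y (j-1) x)

/-- Membership in the domain `𝒟_F`. -/
def MemD (n : ℕ) (F : ℕ → ℕ → ℝ → ℂ) (y : ℝ → ℂ) : Prop :=
  ∃ Y : ℕ → ℝ → ℂ, QuasiChain n F y Y

/-- The space `𝔐_n` (even case): `(m+1) × (m+1)` real matrices with vanishing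
bottom-right entry. -/
def Mzero (m : ℕ) : Submodule ℝ (Matrix (Fin (m+1)) (Fin (m+1)) ℝ) where
  carrier := {A | A (Fin.last m) (Fin.last m) = 0}
  add_mem' := by
    intro a b ha hb
    simp only [Set.mem_setOf_eq, Matrix.add_apply] at *
    rw [ha, hb, add_zero]
  zero_mem' := by simp only [Set.mem_setOf_eq, Matrix.zero_apply]
  smul_mem' := by
    intro c A hA
    simp only [Set.mem_setOf_eq, Matrix.smul_apply] at *
    rw [hA, smul_zero]

lemma chiN_eq_zero {m ν i r c : ℕ}
    (h : ¬ (ν / 2 ≤ r ∧ ν / 2 ≤ c ∧ r + c = 2 * (ν / 2) + ν % 2 + i)) :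
    chiN m ν i r c = 0 := by
  unfold chiN
  split_ifs with h1 h2 h3 h4 h5 <;> try rfl
  all_goals refine absurd ⟨?_, ?_, ?_⟩ h <;> omega

lemma chiN_ne_zero {m ν i r c : ℕ} (h : chiN m ν i r c ≠ 0) :
    ν / 2 ≤ r ∧ ν / 2 ≤ c ∧ r + c = 2 * (ν / 2) + ν % 2 + i := by
  by_contra hcon
  exact h (chiN_eq_zero hcon)

lemma chiN_even_eval {m k i r c : ℕ} (hr : r ≤ m) (hc : c ≤ m) (hkr : k ≤ r) (hkc : k ≤ c)
    (hd : (r - k) + (c - k) = i) :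
    chiN m (2*k) i r c = (Nat.choose i (r - k) : ℝ) := by
  have h1 : (2*k) / 2 = k := by omega
  have h2 : (2*k) % 2 = 0 := by omega
  simp only [chiN, h1, h2, if_true]
  rw [if_pos ⟨hr, hc⟩, if_pos ⟨hkr, hkc, hd⟩]

lemma chiN_odd_eval {m k i r c : ℕ} (hr : r ≤ m) (hc : c ≤ m) (hkr : k ≤ r) (hkc : k ≤ c)
    (hd : (r - k) + (c - k) = i + 1) :
    chiN m (2*k+1) i r c =
      (Nat.choose (i+1) (r-k) : ℝ)
        - 2 * (if r - k = 0 then 0 else (Nat.choose i (r-k-1) : ℝ)) := by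
  have h1 : (2*k+1) / 2 = k := by omega
  have h2 : (2*k+1) % 2 = 1 := by omega
  simp only [chiN, h1, h2]
  rw [if_pos ⟨hr, hc⟩, if_neg (by omega : ¬ (1:ℕ) = 0), if_pos ⟨hkr, hkc, hd⟩]

lemma chiN_last {m ν i : ℕ} (hν : ν < 2*m) (hi : i ≤ iOrd m ν) : chiN m ν i m m = 0 := by
  unfold iOrd at hi
  unfold chiN
  split_ifs with h1 h2 h3 h4 h5 <;> try rfl
  all_goals exfalso; omega

abbrev ChiIdx (m : ℕ) := Σ ν : Fin (2*m), Fin (iOrd m (ν : ℕ) + 1)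

lemma sigma_index_ext {m : ℕ} (p q : ChiIdx m)
    (h1 : (p.1 : ℕ) = (q.1 : ℕ)) (h2 : (p.2 : ℕ) = (q.2 : ℕ)) : p = q := by
  obtain ⟨⟨a, ha⟩, ⟨b, hb⟩⟩ := p
  obtain ⟨⟨a', ha'⟩, ⟨b', hb'⟩⟩ := q
  simp only [Fin.val] at h1 h2
  subst h1; subst h2; rfl

lemma sigma_index_inj {m : ℕ} {p q : ChiIdx m} (h : p = q) :
    (p.1 : ℕ) = (q.1 : ℕ) ∧ (p.2 : ℕ) = (q.2 : ℕ) := by subst h; exact ⟨rfl, rfl⟩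

noncomputable def Ecoef (m : ℕ) (c : ChiIdx m → ℝ) (k i : ℕ) : ℝ :=
  if h : 2*k < 2*m ∧ i < iOrd m (2*k) + 1 then c ⟨⟨2*k, h.1⟩, ⟨i, h.2⟩⟩ else 0

noncomputable def Ocoef (m : ℕ) (c : ChiIdx m → ℝ) (k i : ℕ) : ℝ :=
  if h : 2*k+1 < 2*m ∧ i < iOrd m (2*k+1) + 1 then c ⟨⟨2*k+1, h.1⟩, ⟨i, h.2⟩⟩ else 0

lemma iOrd_even (m k : ℕ) : iOrd m (2*k) = m - k := by unfold iOrd; omega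

lemma iOrd_odd (m k : ℕ) : iOrd m (2*k+1) = m - k - 1 := by unfold iOrd; omega

lemma chiN_even_corner1 {m k i : ℕ} (hk : k ≤ m) (hki : k + i ≤ m) :
    chiN m (2*k) i k (k+i) = 1 := by
  rw [chiN_even_eval hk hki le_rfl (by omega) (by omega)]
  simp [Nat.sub_self]

lemma chiN_even_corner2 {m k i : ℕ} (hk : k ≤ m) (hki : k + i ≤ m) :
    chiN m (2*k) i (k+i) k = 1 := by
  rw [chiN_even_eval hki hk (by omega) le_rfl (by omega)]
  simp

lemma chiN_odd_corner1 {m k i : ℕ} (hk : k ≤ m) (hki : k + i + 1 ≤ m) :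
    chiN m (2*k+1) i k (k+i+1) = 1 := by
  rw [chiN_odd_eval hk hki le_rfl (by omega) (by omega)]
  simp [Nat.sub_self]

lemma chiN_odd_corner2 {m k i : ℕ} (hk : k ≤ m) (hki : k + i + 1 ≤ m) :
    chiN m (2*k+1) i (k+i+1) k = -1 := by
  rw [chiN_odd_eval hki hk (by omega) le_rfl (by omega)]
  have e : k + i + 1 - k = i + 1 := by omega
  rw [e, if_neg (by omega), Nat.choose_self]
  norm_num

lemma coef_zero_of_IH (m : ℕ) (c : ChiIdx m → ℝ) (d : ℕ) {k : ℕ}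
    (IH : ∀ k' < k, (∀ i, 2*k' + i = d → Ecoef m c k' i = 0) ∧
                    (∀ i, 2*k' + 1 + i = d → Ocoef m c k' i = 0))
    (p : ChiIdx m) (hlt : (p.1:ℕ)/2 < k)
    (hd : 2*((p.1:ℕ)/2) + (p.1:ℕ)%2 + (p.2:ℕ) = d) :
    c p = 0 := by
  have hν : (p.1:ℕ) < 2*m := p.1.isLt
  have hj : (p.2:ℕ) < iOrd m (p.1:ℕ) + 1 := p.2.isLt
  rcases Nat.even_or_odd (p.1:ℕ) with he | ho
  · have hpar : (p.1:ℕ) % 2 = 0 := Nat.even_iff.mp he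
    have h2k : 2 * ((p.1:ℕ)/2) = (p.1:ℕ) := by omega
    have hE := (IH _ hlt).1 (p.2:ℕ) (by omega)
    rw [Ecoef, dif_pos ⟨by omega, by rw [h2k]; exact hj⟩] at hE
    rw [← hE]
    exact congrArg c (sigma_index_ext _ _ h2k.symm rfl)
  · have hpar : (p.1:ℕ) % 2 = 1 := Nat.odd_iff.mp ho
    have h2k : 2 * ((p.1:ℕ)/2) + 1 = (p.1:ℕ) := by omega
    have hO := (IH _ hlt).2 (p.2:ℕ) (by omega)
    rw [Ocoef, dif_pos ⟨by omega, by rw [h2k]; exact hj⟩] at hO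
    rw [← hO]
    exact congrArg c (sigma_index_ext _ _ h2k.symm rfl)

lemma key (m : ℕ) (c : ChiIdx m → ℝ)
    (H : ∀ r c' : Fin (m+1),
      ∑ p : ChiIdx m, c p * chiN m (p.1 : ℕ) (p.2 : ℕ) (r : ℕ) (c' : ℕ) = 0)
    (d : ℕ) :
    ∀ k, (∀ i, 2*k + i = d → Ecoef m c k i = 0) ∧
         (∀ i, 2*k + 1 + i = d → Ocoef m c k i = 0) := by
  intro k
  induction k using Nat.strong_induction_on with
  | _ k IH =>
    constructor
    · -- even coefficients
      intro i hi
      by_cases hv : 2*k < 2*m ∧ i < iOrd m (2*k) + 1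
      swap
      · rw [Ecoef, dif_neg hv]
      have hkm : k < m := by omega
      have him : i ≤ m - k := by have h2 := hv.2; rw [iOrd_even] at h2; omega
      set p₀ : ChiIdx m := ⟨⟨2*k, hv.1⟩, ⟨i, hv.2⟩⟩ with hp₀
      have hterm : ∀ p : ChiIdx m,
          c p * chiN m (p.1:ℕ) (p.2:ℕ) k (k+i) + c p * chiN m (p.1:ℕ) (p.2:ℕ) (k+i) k
            = if p = p₀ then 2 * c p else 0 := by
        intro p
        have hν : (p.1:ℕ) < 2*m := p.1.isLt
        have hj : (p.2:ℕ) < iOrd m (p.1:ℕ) + 1 := p.2.isLt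
        by_cases hP : (p.1:ℕ) / 2 ≤ k ∧ 2 * ((p.1:ℕ) / 2) + (p.1:ℕ) % 2 + (p.2:ℕ) = 2*k + i
        · rcases Nat.lt_or_ge ((p.1:ℕ) / 2) k with hlt | hge
          · rw [coef_zero_of_IH m c d IH p hlt (by omega)]
            rw [if_neg ?_]
            · ring
            intro h
            have h1 := (sigma_index_inj h).1
            simp only [hp₀] at h1
            omega
          · have hk : (p.1:ℕ) / 2 = k := le_antisymm hP.1 hge
            rcases Nat.even_or_odd (p.1:ℕ) with he | ho
            · have hpar : (p.1:ℕ) % 2 = 0 := Nat.even_iff.mp he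
              have hν2k : (p.1:ℕ) = 2*k := by omega
              have hji : (p.2:ℕ) = i := by omega
              have hpp : p = p₀ := sigma_index_ext _ _ hν2k hji
              have hA : chiN m (p.1:ℕ) (p.2:ℕ) k (k+i) = 1 := by
                rw [hji, hν2k]; exact chiN_even_corner1 (by omega) (by omega)
              have hB : chiN m (p.1:ℕ) (p.2:ℕ) (k+i) k = 1 := by
                rw [hji, hν2k]; exact chiN_even_corner2 (by omega) (by omega)
              rw [if_pos hpp, hA, hB]
              ring
            · have hpar : (p.1:ℕ) % 2 = 1 := Nat.odd_iff.mp ho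
              have hν2k : (p.1:ℕ) = 2*k+1 := by omega
              have hji : i = (p.2:ℕ) + 1 := by omega
              have hA : chiN m (p.1:ℕ) (p.2:ℕ) k (k+i) = 1 := by
                rw [show (p.2:ℕ) = i - 1 from by omega, hν2k,
                  show k + i = k + (i-1) + 1 from by omega]
                exact chiN_odd_corner1 (by omega) (by omega)
              have hB : chiN m (p.1:ℕ) (p.2:ℕ) (k+i) k = -1 := by
                rw [show (p.2:ℕ) = i - 1 from by omega, hν2k,
                  show k + i = k + (i-1) + 1 from by omega]
                exact chiN_odd_corner2 (by omega) (by omega)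
              rw [if_neg ?_]
              · rw [hA, hB]; ring
              intro h
              have h1 := (sigma_index_inj h).1
              simp only [hp₀] at h1
              omega
        · have hz1 : chiN m (p.1:ℕ) (p.2:ℕ) k (k+i) = 0 := by
            apply chiN_eq_zero; intro hcon; exact hP ⟨hcon.1, by omega⟩
          have hz2 : chiN m (p.1:ℕ) (p.2:ℕ) (k+i) k = 0 := by
            apply chiN_eq_zero; intro hcon; exact hP ⟨hcon.2.1, by omega⟩
          rw [hz1, hz2, if_neg ?_]
          · ring
          intro h
          obtain ⟨e1, e2⟩ := sigma_index_inj h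
          simp only [hp₀] at e1 e2
          exact hP (by have e3 : (p₀.1:ℕ) = 2*k := rfl; have e4 : (p₀.2:ℕ) = i := rfl; omega)
      have h1 : ∑ p : ChiIdx m, c p * chiN m (p.1:ℕ) (p.2:ℕ) k (k+i) = 0 :=
        H ⟨k, by omega⟩ ⟨k+i, by omega⟩
      have h2 : ∑ p : ChiIdx m, c p * chiN m (p.1:ℕ) (p.2:ℕ) (k+i) k = 0 :=
        H ⟨k+i, by omega⟩ ⟨k, by omega⟩
      have hsum : ∑ p : ChiIdx m, (if p = p₀ then 2 * c p else 0) = 0 := by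
        rw [Finset.sum_congr rfl (fun p _ => (hterm p).symm), Finset.sum_add_distrib, h1, h2,
          add_zero]
      rw [Finset.sum_ite_eq' Finset.univ p₀ (fun p => 2 * c p),
        if_pos (Finset.mem_univ _)] at hsum
      rw [Ecoef, dif_pos hv]
      show c p₀ = 0
      linarith
    · -- odd coefficients
      intro i hi
      by_cases hv : 2*k+1 < 2*m ∧ i < iOrd m (2*k+1) + 1
      swap
      · rw [Ocoef, dif_neg hv]
      have hkm : k < m := by omega
      have him : k + i + 1 ≤ m := by have h2 := hv.2; rw [iOrd_odd] at h2; omega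
      set p₁ : ChiIdx m := ⟨⟨2*k+1, hv.1⟩, ⟨i, hv.2⟩⟩ with hp₁
      have hterm : ∀ p : ChiIdx m,
          c p * chiN m (p.1:ℕ) (p.2:ℕ) k (k+i+1) - c p * chiN m (p.1:ℕ) (p.2:ℕ) (k+i+1) k
            = if p = p₁ then 2 * c p else 0 := by
        intro p
        have hν : (p.1:ℕ) < 2*m := p.1.isLt
        have hj : (p.2:ℕ) < iOrd m (p.1:ℕ) + 1 := p.2.isLt
        by_cases hP : (p.1:ℕ) / 2 ≤ k ∧ 2 * ((p.1:ℕ) / 2) + (p.1:ℕ) % 2 + (p.2:ℕ) = 2*k + 1 + i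
        · rcases Nat.lt_or_ge ((p.1:ℕ) / 2) k with hlt | hge
          · rw [coef_zero_of_IH m c d IH p hlt (by omega)]
            rw [if_neg ?_]
            · ring
            intro h
            have h1 := (sigma_index_inj h).1
            simp only [hp₁] at h1
            omega
          · have hk : (p.1:ℕ) / 2 = k := le_antisymm hP.1 hge
            rcases Nat.even_or_odd (p.1:ℕ) with he | ho
            · have hpar : (p.1:ℕ) % 2 = 0 := Nat.even_iff.mp he
              have hν2k : (p.1:ℕ) = 2*k := by omega
              have hji : (p.2:ℕ) = i + 1 := by omega
              have hA : chiN m (p.1:ℕ) (p.2:ℕ) k (k+i+1) = 1 := by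
                rw [hji, hν2k, show k + i + 1 = k + (i+1) from by omega]
                exact chiN_even_corner1 (by omega) (by omega)
              have hB : chiN m (p.1:ℕ) (p.2:ℕ) (k+i+1) k = 1 := by
                rw [hji, hν2k, show k + i + 1 = k + (i+1) from by omega]
                exact chiN_even_corner2 (by omega) (by omega)
              rw [if_neg ?_]
              · rw [hA, hB]; ring
              intro h
              have h1 := (sigma_index_inj h).1
              simp only [hp₁] at h1
              omega
            · have hpar : (p.1:ℕ) % 2 = 1 := Nat.odd_iff.mp ho
              have hν2k : (p.1:ℕ) = 2*k+1 := by omega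
              have hji : (p.2:ℕ) = i := by omega
              have hpp : p = p₁ := sigma_index_ext _ _ hν2k hji
              have hA : chiN m (p.1:ℕ) (p.2:ℕ) k (k+i+1) = 1 := by
                rw [hji, hν2k]; exact chiN_odd_corner1 (by omega) (by omega)
              have hB : chiN m (p.1:ℕ) (p.2:ℕ) (k+i+1) k = -1 := by
                rw [hji, hν2k]; exact chiN_odd_corner2 (by omega) (by omega)
              rw [if_pos hpp, hA, hB]
              ring
        · have hz1 : chiN m (p.1:ℕ) (p.2:ℕ) k (k+i+1) = 0 := by
            apply chiN_eq_zero; intro hcon; exact hP ⟨hcon.1, by omega⟩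
          have hz2 : chiN m (p.1:ℕ) (p.2:ℕ) (k+i+1) k = 0 := by
            apply chiN_eq_zero; intro hcon; exact hP ⟨hcon.2.1, by omega⟩
          rw [hz1, hz2, if_neg ?_]
          · ring
          intro h
          obtain ⟨e1, e2⟩ := sigma_index_inj h
          simp only [hp₁] at e1 e2
          exact hP (by have e3 : (p₁.1:ℕ) = 2*k+1 := rfl; have e4 : (p₁.2:ℕ) = i := rfl; omega)
      have h1 : ∑ p : ChiIdx m, c p * chiN m (p.1:ℕ) (p.2:ℕ) k (k+i+1) = 0 :=
        H ⟨k, by omega⟩ ⟨k+i+1, by omega⟩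
      have h2 : ∑ p : ChiIdx m, c p * chiN m (p.1:ℕ) (p.2:ℕ) (k+i+1) k = 0 :=
        H ⟨k+i+1, by omega⟩ ⟨k, by omega⟩
      have hsum : ∑ p : ChiIdx m, (if p = p₁ then 2 * c p else 0) = 0 := by
        rw [Finset.sum_congr rfl (fun p _ => (hterm p).symm), Finset.sum_sub_distrib, h1, h2,
          sub_zero]
      rw [Finset.sum_ite_eq' Finset.univ p₁ (fun p => 2 * c p),
        if_pos (Finset.mem_univ _)] at hsum
      rw [Ocoef, dif_pos hv]
      show c p₁ = 0
      linarith

lemma sum_pairs (m : ℕ) (g : ℕ → ℕ) :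
    ∑ ν ∈ Finset.range (2*m), g ν = ∑ k ∈ Finset.range m, (g (2*k) + g (2*k+1)) := by
  induction m with
  | zero => simp
  | succ n ih =>
    rw [show 2*(n+1) = (2*n+1)+1 by ring, Finset.sum_range_succ, Finset.sum_range_succ,
      Finset.sum_range_succ, ih, show 2*n+1 = 2*n+1 from rfl]
    ring

lemma sum_lin (m : ℕ) : ∑ k ∈ Finset.range m, (2*k+3) = m*m + 2*m := by
  induction m with
  | zero => simp
  | succ n ih => rw [Finset.sum_range_succ, ih]; ring

lemma sum_iOrd (m : ℕ) : ∑ ν ∈ Finset.range (2*m), (iOrd m ν + 1) = m*m + 2*m := by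
  rw [sum_pairs]
  rw [Finset.sum_congr rfl (fun k hk => by
    rw [iOrd_even, iOrd_odd]
    have := Finset.mem_range.mp hk
    omega : ∀ k ∈ Finset.range m, (iOrd m (2*k) + 1) + (iOrd m (2*k+1) + 1) = 2*(m-k)+1)]
  have hrefl := Finset.sum_range_reflect (fun j => 2*(j+1)+1) m
  rw [Finset.sum_congr rfl (fun k hk => (by
      have := Finset.mem_range.mp hk
      omega : 2*(m-k)+1 = 2*((m-1-k)+1)+1)), hrefl,
    Finset.sum_congr rfl (fun k _ => (by ring : 2*(k+1)+1 = 2*k+3)), sum_lin]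

noncomputable def phiM (m : ℕ) : Matrix (Fin (m+1)) (Fin (m+1)) ℝ →ₗ[ℝ] ℝ where
  toFun A := A (Fin.last m) (Fin.last m)
  map_add' _ _ := rfl
  map_smul' _ _ := rfl

lemma Mzero_eq_ker (m : ℕ) : Mzero m = LinearMap.ker (phiM m) := by
  ext A; exact Iff.rfl

lemma finrank_Mzero (m : ℕ) : Module.finrank ℝ (Mzero m) = m*m + 2*m := by
  have hsurj : LinearMap.range (phiM m) = ⊤ := by
    rw [LinearMap.range_eq_top]
    intro x
    exact ⟨Matrix.of (fun _ _ => x), rfl⟩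
  have h := LinearMap.finrank_range_add_finrank_ker (phiM m)
  rw [hsurj, finrank_top] at h
  have hM : Module.finrank ℝ (Matrix (Fin (m+1)) (Fin (m+1)) ℝ) = (m+1)*(m+1) := by
    rw [Module.finrank_matrix]
    simp
  rw [hM, Module.finrank_self] at h
  rw [Mzero_eq_ker]
  have : (m+1)*(m+1) = m*m+2*m+1 := by ring
  omega


/-- Lemma `basis`, even case: for `n = 2m`, the matrices `χ_{ν,i}`, `ν = 0,…,n-1`,
`i = 0,…,i_ν`, form a basis of `𝔐_n`. -/
theorem chi_basis_even (m : ℕ) (hm : 1 ≤ m) :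
    LinearIndependent ℝ
      (fun p : Σ ν : Fin (2*m), Fin (iOrd m (ν : ℕ) + 1) =>
        chiM m (p.1 : ℕ) (p.2 : ℕ)) ∧
    Submodule.span ℝ
      (Set.range fun p : Σ ν : Fin (2*m), Fin (iOrd m (ν : ℕ) + 1) =>
        chiM m (p.1 : ℕ) (p.2 : ℕ)) = Mzero m := by
  have hli : LinearIndependent ℝ
      (fun p : ChiIdx m => chiM m (p.1 : ℕ) (p.2 : ℕ)) := by
    rw [Fintype.linearIndependent_iff]
    intro g hg
    have H : ∀ r c' : Fin (m+1),
        ∑ p : ChiIdx m, g p * chiN m (p.1:ℕ) (p.2:ℕ) (r:ℕ) (c':ℕ) = 0 := by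
      intro r c'
      have h := congrFun (congrFun hg r) c'
      simpa [Matrix.sum_apply, chiM, Matrix.smul_apply, smul_eq_mul] using h
    intro p
    have hν : (p.1:ℕ) < 2*m := p.1.isLt
    have hj : (p.2:ℕ) < iOrd m (p.1:ℕ) + 1 := p.2.isLt
    rcases Nat.even_or_odd (p.1:ℕ) with he | ho
    · have hpar : (p.1:ℕ) % 2 = 0 := Nat.even_iff.mp he
      have h2k : 2 * ((p.1:ℕ)/2) = (p.1:ℕ) := by omega
      have hE := (key m g H (2*((p.1:ℕ)/2) + (p.2:ℕ)) ((p.1:ℕ)/2)).1 (p.2:ℕ) rfl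
      rw [Ecoef, dif_pos ⟨by omega, by rw [h2k]; exact hj⟩] at hE
      rw [← hE]
      exact congrArg g (sigma_index_ext _ _ h2k.symm rfl)
    · have hpar : (p.1:ℕ) % 2 = 1 := Nat.odd_iff.mp ho
      have h2k : 2 * ((p.1:ℕ)/2) + 1 = (p.1:ℕ) := by omega
      have hO := (key m g H (2*((p.1:ℕ)/2) + 1 + (p.2:ℕ)) ((p.1:ℕ)/2)).2 (p.2:ℕ) rfl
      rw [Ocoef, dif_pos ⟨by omega, by rw [h2k]; exact hj⟩] at hO
      rw [← hO]
      exact congrArg g (sigma_index_ext _ _ h2k.symm rfl)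
  refine ⟨hli, ?_⟩
  have hcard : Fintype.card (ChiIdx m) = m*m + 2*m := by
    rw [Fintype.card_sigma]
    simp only [Fintype.card_fin]
    rw [Fin.sum_univ_eq_sum_range (fun ν => iOrd m ν + 1) (2*m)]
    exact sum_iOrd m
  apply Submodule.eq_of_le_of_finrank_eq
  · rw [Submodule.span_le]
    rintro A ⟨p, rfl⟩
    show chiM m (p.1:ℕ) (p.2:ℕ) ∈ Mzero m
    show chiM m (p.1:ℕ) (p.2:ℕ) (Fin.last m) (Fin.last m) = 0
    exact chiN_last p.1.isLt (Nat.lt_succ_iff.mp p.2.isLt)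
  · rw [finrank_Mzero]
    have h := linearIndependent_iff_card_eq_finrank_span.mp hli
    rw [hcard] at h
    exact h.symm
end
end

section
/- Let n = 2m with m ≥ 1. The map 𝒮_n : 𝔔_n → 𝔉_n is well defined (it maps 𝔔_n into 𝔉_n) and is a bijection; its inverse 𝒮_n^{−1} : 𝔉_n → 𝔔_n is given by q_{j−1,m} = (−1)^{m+1} f_{m,j} for j = 1,…,m; q_{m,2m−k} = (−1)^{k+1} f_{k,m+1} for k = m+1,…,2m; q_{j−1,2m−k} = (−1)^{k+1}( f_{k,j} − f_{k,m+1} f_{m,j} ) for k = m+1,…,2m and j = 1,…,m; and q_{m,m} = 0. -/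
open MeasureTheory Set

noncomputable section

/-! ### Auxiliary lemmas -/

instance : IsFiniteMeasure μ01 := by
  constructor
  simp only [μ01, Measure.restrict_apply_univ, Real.volume_Ioo]
  norm_num

lemma memL1_of_memL2 {f : ℝ → ℂ} (h : MemL2 f) : MemL1 f :=
  h.integrable one_le_two

lemma memL1_mul {f g : ℝ → ℂ} (hf : MemL2 f) (hg : MemL2 g) :
    MemL1 (fun x => f x * g x) := by
  have h : (1 : ENNReal) / 1 = 1 / 2 + 1 / 2 := by
    rw [ENNReal.div_add_div_same, one_div_one]
    norm_num
    rw [ENNReal.div_self two_ne_zero ENNReal.ofNat_ne_top]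
  have := hg.smul (𝕜 := ℂ) hf (r := 1) (hpqr := ⟨by rw [ENNReal.inv_two_add_inv_two, inv_one]⟩)
  have h2 : MemL1 (f • g) := memLp_one_iff_integrable.mp this
  exact h2

lemma memL1_const_mul {f : ℝ → ℂ} (c : ℂ) (h : MemL1 f) :
    MemL1 (fun x => c * f x) := h.const_mul c

lemma memL2_const_mul {f : ℝ → ℂ} (c : ℂ) (h : MemL2 f) :
    MemL2 (fun x => c * f x) := h.const_mul c

lemma neg_one_pow_mul_eq_one (a b : ℕ) (h : Even (a + b)) :
    (-1 : ℂ) ^ a * (-1 : ℂ) ^ b = 1 := by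
  rw [← pow_add]
  exact h.neg_one_pow

/-! ### Evaluation lemmas for `SE` -/

lemma SE_eq1 {m j : ℕ} (Q : ℕ → ℕ → ℝ → ℂ) (x : ℝ) (h1 : 1 ≤ j) (h2 : j ≤ m) :
    SE m Q m j x = (-1:ℂ)^(m+1) * Q (j-1) m x := by
  unfold SE; rw [if_pos ⟨rfl, h1, h2⟩]

lemma SE_eq2 {m k : ℕ} (Q : ℕ → ℕ → ℝ → ℂ) (x : ℝ) (h1 : m+1 ≤ k) (h2 : k ≤ 2*m) :
    SE m Q k (m+1) x = (-1:ℂ)^(k+1) * Q m (2*m-k) x := by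
  unfold SE; rw [if_neg (by omega), if_pos ⟨h1, h2, rfl⟩]

lemma SE_eq3 {m k j : ℕ} (Q : ℕ → ℕ → ℝ → ℂ) (x : ℝ)
    (h1 : m+1 ≤ k) (h2 : k ≤ 2*m) (h3 : 1 ≤ j) (h4 : j ≤ m) :
    SE m Q k j x = (-1:ℂ)^(k+1) * Q (j-1) (2*m-k) x
      + (-1:ℂ)^(m+k) * (Q (j-1) m x * Q m (2*m-k) x) := by
  unfold SE; rw [if_neg (by omega), if_neg (by omega), if_pos ⟨h1, h2, h3, h4⟩]

lemma SE_eq0 {m k j : ℕ} (Q : ℕ → ℕ → ℝ → ℂ)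
    (h : ¬(k = m ∧ 1 ≤ j ∧ j ≤ m) ∧ ¬(m+1 ≤ k ∧ k ≤ 2*m ∧ j = m+1) ∧
      ¬(m+1 ≤ k ∧ k ≤ 2*m ∧ 1 ≤ j ∧ j ≤ m)) :
    SE m Q k j = 0 := by
  unfold SE; rw [if_neg h.1, if_neg h.2.1, if_neg h.2.2]

/-! ### Evaluation lemmas for `SinvE` -/

lemma Sinv_eq1 {m r : ℕ} (F : ℕ → ℕ → ℝ → ℂ) (x : ℝ) (hr : r < m) :
    SinvE m F r m x = (-1:ℂ)^(m+1) * F m (r+1) x := by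
  unfold SinvE; rw [if_pos ⟨hr, rfl⟩]

lemma Sinv_eq2 {m c : ℕ} (F : ℕ → ℕ → ℝ → ℂ) (x : ℝ) (hc : c < m) :
    SinvE m F m c x = (-1:ℂ)^(2*m-c+1) * F (2*m-c) (m+1) x := by
  unfold SinvE; rw [if_neg (by omega), if_pos ⟨rfl, hc⟩]

lemma Sinv_eq3 {m r c : ℕ} (F : ℕ → ℕ → ℝ → ℂ) (x : ℝ) (hr : r < m) (hc : c < m) :
    SinvE m F r c x
      = (-1:ℂ)^(2*m-c+1) * (F (2*m-c) (r+1) x - F (2*m-c) (m+1) x * F m (r+1) x) := by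
  unfold SinvE; rw [if_neg (by omega), if_neg (by omega), if_pos ⟨hr, hc⟩]

lemma Sinv_eq0 {m r c : ℕ} (F : ℕ → ℕ → ℝ → ℂ)
    (h : ¬(r < m ∧ c = m) ∧ ¬(r = m ∧ c < m) ∧ ¬(r < m ∧ c < m)) :
    SinvE m F r c = 0 := by
  unfold SinvE; rw [if_neg h.1, if_neg h.2.1, if_neg h.2.2]

/-! ### The main mapping lemmas -/

lemma SE_mapsTo {m : ℕ} (hm : 1 ≤ m) {Q : ℕ → ℕ → ℝ → ℂ} (hQ : MemQE m Q) :
    MemFE m (SE m Q) := by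
  obtain ⟨h1, h2, h3, h4, h5⟩ := hQ
  refine ⟨?_, ?_, ?_, ?_, ?_⟩
  · intro k j hk1 hk2 hj1 hj2
    unfold SE
    split_ifs with c1 c2 c3
    · exact memL1_const_mul _ (memL1_of_memL2 (h2 _ (by omega)))
    · exact memL1_const_mul _ (memL1_of_memL2 (h3 _ (by omega)))
    · exact ((h1 _ _ (by omega) (by omega)).const_mul _).add
        (((memL1_mul (h2 _ (by omega)) (h3 _ (by omega)))).const_mul _)
    · exact integrableOn_zero
  · intro j hj1 hj2
    have : SE m Q m j = fun x => (-1:ℂ)^(m+1) * Q (j-1) m x := by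
      funext x; exact SE_eq1 Q x hj1 hj2
    rw [this]
    exact memL2_const_mul _ (h2 _ (by omega))
  · intro k hk1 hk2
    have : SE m Q k (m+1) = fun x => (-1:ℂ)^(k+1) * Q m (2*m-k) x := by
      funext x; exact SE_eq2 Q x hk1 hk2
    rw [this]
    exact memL2_const_mul _ (h3 _ (by omega))
  · intro k j hk1 hk2 hj1 hj2 hc
    exact SE_eq0 Q ⟨by omega, by omega, by omega⟩
  · intro k j hc
    exact SE_eq0 Q ⟨by omega, by omega, by omega⟩

lemma Sinv_mapsTo {m : ℕ} (hm : 1 ≤ m) {F : ℕ → ℕ → ℝ → ℂ} (hF : MemFE m F) :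
    MemQE m (SinvE m F) := by
  obtain ⟨h1, h2, h3, h4, h5⟩ := hF
  refine ⟨?_, ?_, ?_, ?_, ?_⟩
  · intro r j hr hj
    have : SinvE m F r j = fun x =>
        (-1:ℂ)^(2*m-j+1) * (F (2*m-j) (r+1) x - F (2*m-j) (m+1) x * F m (r+1) x) := by
      funext x; exact Sinv_eq3 F x hr hj
    rw [this]
    exact ((h1 _ _ (by omega) (by omega) (by omega) (by omega)).sub
      (memL1_mul (h3 _ (by omega) (by omega)) (h2 _ (by omega) (by omega)))).const_mul _
  · intro r hr
    have : SinvE m F r m = fun x => (-1:ℂ)^(m+1) * F m (r+1) x := by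
      funext x; exact Sinv_eq1 F x hr
    rw [this]
    exact memL2_const_mul _ (h2 _ (by omega) (by omega))
  · intro r hr
    have : SinvE m F m r = fun x => (-1:ℂ)^(2*m-r+1) * F (2*m-r) (m+1) x := by
      funext x; exact Sinv_eq2 F x hr
    rw [this]
    exact memL2_const_mul _ (h3 _ (by omega) (by omega))
  · exact Sinv_eq0 F ⟨by omega, by omega, by omega⟩
  · intro r j hc
    exact Sinv_eq0 F ⟨by omega, by omega, by omega⟩

/-! ### Inverse identities -/

lemma Sinv_SE {m : ℕ} (hm : 1 ≤ m) {Q : ℕ → ℕ → ℝ → ℂ} (hQ : MemQE m Q) :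
    SinvE m (SE m Q) = Q := by
  obtain ⟨h1, h2, h3, h4, h5⟩ := hQ
  funext r c
  rcases Nat.lt_trichotomy r m with hr | hr | hr
  · rcases Nat.lt_trichotomy c m with hc | hc | hc
    · -- r < m, c < m
      funext x
      rw [Sinv_eq3 _ x hr hc,
        SE_eq3 Q x (k := 2*m-c) (j := r+1) (by omega) (by omega) (by omega) (by omega),
        SE_eq2 Q x (by omega) (by omega), SE_eq1 Q x (by omega) (by omega)]
      have e1 : 2*m - (2*m - c) = c := by omega
      have e2 : r + 1 - 1 = r := by omega
      rw [e1, e2]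
      have hA : (-1:ℂ)^(2*m-c+1) * (-1:ℂ)^(2*m-c+1) = 1 :=
        neg_one_pow_mul_eq_one _ _ ⟨2*m-c+1, by ring⟩
      have hB : (-1:ℂ)^(2*m-c+1) * (-1:ℂ)^(m+(2*m-c)) = (-1:ℂ)^(m+1) * 1 := by
        rw [mul_one, ← pow_add]
        have : 2*m-c+1 + (m+(2*m-c)) = (m+1) + 2*(2*m-c) := by omega
        rw [this, pow_add, pow_mul, neg_one_sq, one_pow, mul_one]
      linear_combination (Q r c x - (-1:ℂ)^(m+1) * (Q r m x * Q m c x)) * hA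
        + (Q r m x * Q m c x) * hB
    · -- r < m, c = m
      rw [hc]
      funext x
      rw [Sinv_eq1 _ x hr, SE_eq1 Q x (by omega) (by omega)]
      have e2 : r + 1 - 1 = r := by omega
      rw [e2]
      have hA : (-1:ℂ)^(m+1) * (-1:ℂ)^(m+1) = 1 :=
        neg_one_pow_mul_eq_one _ _ ⟨m+1, by ring⟩
      linear_combination (Q r m x) * hA
    · -- r < m, c > m
      rw [Sinv_eq0 _ ⟨by omega, by omega, by omega⟩, h5 r c (by omega)]
  · rw [hr]
    rcases Nat.lt_trichotomy c m with hc | hc | hc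
    · -- r = m, c < m
      funext x
      rw [Sinv_eq2 _ x hc, SE_eq2 Q x (by omega) (by omega)]
      have e1 : 2*m - (2*m - c) = c := by omega
      rw [e1]
      have hA : (-1:ℂ)^(2*m-c+1) * (-1:ℂ)^(2*m-c+1) = 1 :=
        neg_one_pow_mul_eq_one _ _ ⟨2*m-c+1, by ring⟩
      linear_combination (Q m c x) * hA
    · -- r = m, c = m
      rw [hc]
      rw [Sinv_eq0 _ ⟨by omega, by omega, by omega⟩, h4]
    · rw [Sinv_eq0 _ ⟨by omega, by omega, by omega⟩, h5 m c (by omega)]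
  · rw [Sinv_eq0 _ ⟨by omega, by omega, by omega⟩, h5 r c (by omega)]

lemma SE_Sinv {m : ℕ} (hm : 1 ≤ m) {F : ℕ → ℕ → ℝ → ℂ} (hF : MemFE m F) :
    SE m (SinvE m F) = F := by
  obtain ⟨h1, h2, h3, h4, h5⟩ := hF
  funext k j
  rcases Nat.lt_trichotomy k m with hk | hk | hk
  · -- k < m : SE = 0 and F k j = 0
    rw [SE_eq0 _ ⟨by omega, by omega, by omega⟩]
    by_cases h : 1 ≤ k ∧ k ≤ 2*m ∧ 1 ≤ j ∧ j ≤ 2*m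
    · exact (h4 k j h.1 h.2.1 h.2.2.1 h.2.2.2 (Or.inl hk)).symm
    · exact (h5 k j (by omega)).symm
  · -- k = m
    rw [hk]
    by_cases hj : 1 ≤ j ∧ j ≤ m
    · funext x
      rw [SE_eq1 _ x hj.1 hj.2, Sinv_eq1 F x (by omega)]
      have e : j - 1 + 1 = j := by omega
      rw [e]
      have hA : (-1:ℂ)^(m+1) * (-1:ℂ)^(m+1) = 1 :=
        neg_one_pow_mul_eq_one _ _ ⟨m+1, by ring⟩
      linear_combination (F m j x) * hA
    · rw [SE_eq0 _ ⟨by omega, by omega, by omega⟩]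
      by_cases h : 1 ≤ m ∧ m ≤ 2*m ∧ 1 ≤ j ∧ j ≤ 2*m
      · exact (h4 m j h.1 h.2.1 h.2.2.1 h.2.2.2 (by omega)).symm
      · exact (h5 m j (by omega)).symm
  · -- k > m
    by_cases hk2 : k ≤ 2*m
    · by_cases hj : j = m+1
      · subst hj
        funext x
        rw [SE_eq2 _ x (by omega) hk2, Sinv_eq2 F x (by omega)]
        have e : 2*m - (2*m - k) = k := by omega
        rw [e]
        have hA : (-1:ℂ)^(k+1) * (-1:ℂ)^(k+1) = 1 :=
          neg_one_pow_mul_eq_one _ _ ⟨k+1, by ring⟩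
        linear_combination (F k (m+1) x) * hA
      · by_cases hj2 : 1 ≤ j ∧ j ≤ m
        · funext x
          rw [SE_eq3 _ x (by omega) hk2 hj2.1 hj2.2,
            Sinv_eq3 F x (by omega) (by omega), Sinv_eq1 F x (by omega),
            Sinv_eq2 F x (by omega)]
          have e1 : 2*m - (2*m - k) = k := by omega
          have e2 : j - 1 + 1 = j := by omega
          rw [e1, e2]
          have hA : (-1:ℂ)^(k+1) * (-1:ℂ)^(k+1) = 1 :=
            neg_one_pow_mul_eq_one _ _ ⟨k+1, by ring⟩
          have hB : (-1:ℂ)^(m+k) * ((-1:ℂ)^(m+1) * (-1:ℂ)^(k+1)) = 1 := by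
            rw [← pow_add, ← pow_add]
            exact Even.neg_one_pow ⟨m+k+1, by ring⟩
          linear_combination (F k j x - F k (m+1) x * F m j x) * hA
            + (F m j x * F k (m+1) x) * hB
        · rw [SE_eq0 _ ⟨by omega, by omega, by omega⟩]
          by_cases h : 1 ≤ k ∧ k ≤ 2*m ∧ 1 ≤ j ∧ j ≤ 2*m
          · exact (h4 k j h.1 h.2.1 h.2.2.1 h.2.2.2 (by omega)).symm
          · exact (h5 k j (by omega)).symm
    · rw [SE_eq0 _ ⟨by omega, by omega, by omega⟩]
      exact (h5 k j (by omega)).symm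

/-- `𝒮_n` (`n = 2m`) maps `𝔔_n` bijectively onto `𝔉_n`, with inverse `𝒮_n⁻¹`
given by the formulas `q_{j-1,m} = (-1)^{m+1} f_{m,j}`,
`q_{m,2m-k} = (-1)^{k+1} f_{k,m+1}`,
`q_{j-1,2m-k} = (-1)^{k+1} (f_{k,j} - f_{k,m+1} f_{m,j})`, `q_{m,m} = 0`. -/
theorem SE_bijection (m : ℕ) (hm : 1 ≤ m) :
    Set.BijOn (SE m) {Q | MemQE m Q} {F | MemFE m F} ∧
    (∀ Q, MemQE m Q → SinvE m (SE m Q) = Q) ∧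
    (∀ F, MemFE m F → SE m (SinvE m F) = F) := by
  refine ⟨Set.InvOn.bijOn ⟨fun Q hQ => Sinv_SE hm hQ, fun F hF => SE_Sinv hm hF⟩
    (fun Q hQ => SE_mapsTo hm hQ) (fun F hF => Sinv_mapsTo hm hF),
    fun Q hQ => Sinv_SE hm hQ, fun F hF => SE_Sinv hm hF⟩
end
end

section
/- Let n = 2m with m ≥ 1. Every Q ∈ 𝔔_n admits a representation Q(x) = Σ_{ν=0}^{n−1} Σ_{i=0}^{i_ν} τ_{ν,i}(x) χ_{ν,i} for a.e. x ∈ (0,1), where τ_{ν,i_ν} ∈ L²(0,1) for each ν and τ_{ν,i} ∈ L¹(0,1) for i < i_ν; moreover this representation is unique, i.e. the coefficient functions τ_{ν,i} are determined almost everywhere by Q. -/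
open MeasureTheory Set

noncomputable section

/-- `τ` represents `Q ∈ 𝔔_n` (`n = 2m`): `τ_{ν,i_ν} ∈ L²(0,1)`, `τ_{ν,i} ∈ L¹(0,1)`
for `i < i_ν`, and `Q(x) = ∑_{ν=0}^{n-1} ∑_{i=0}^{i_ν} τ_{ν,i}(x) χ_{ν,i}` a.e. on `(0,1)`. -/
def RepE (m : ℕ) (Q : ℕ → ℕ → ℝ → ℂ) (τ : ℕ → ℕ → ℝ → ℂ) : Prop :=
  (∀ ν < 2*m, MemL2 (τ ν (iOrd m ν))) ∧
  (∀ ν < 2*m, ∀ i < iOrd m ν, MemL1 (τ ν i)) ∧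
  (∀ᵐ x ∂μ01, ∀ r ≤ m, ∀ c ≤ m,
    Q r c x = ∑ ν ∈ Finset.range (2*m), ∑ i ∈ Finset.range (iOrd m ν + 1),
      τ ν i x * (chiN m ν i r c : ℂ))

/-- Even diagonal basis vector value. -/
def Vd (D k s : ℕ) : ℂ :=
  if k ≤ s ∧ k + s ≤ D then ((D - 2*k).choose (s - k) : ℂ) else 0

/-- Odd diagonal basis vector value. -/
def Wd (D k s : ℕ) : ℂ :=
  if k ≤ s ∧ k + s ≤ D then
    ((D - 2*k).choose (s - k) : ℂ)
      - 2 * (if s = k then 0 else ((D - 2*k - 1).choose (s - k - 1) : ℂ))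
  else 0

/-- Reduced diagonal data after removing the `k = 0` contributions. -/
def redQ (D : ℕ) (q : ℕ → ℂ) : ℕ → ℂ := fun s =>
  q (s+1) - (q 0 + q D)/2 * (D.choose (s+1) : ℂ)
    - (q 0 - q D)/2 * ((D.choose (s+1) : ℂ) - 2 * ((D - 1).choose s : ℂ))

/-- Even coefficients. -/
def aC : ℕ → ℕ → (ℕ → ℂ) → ℂ
  | 0, D, q => (q 0 + q D)/2
  | (k+1), D, q => aC k (D - 2) (redQ D q)

/-- Odd coefficients. -/
def bC : ℕ → ℕ → (ℕ → ℂ) → ℂ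
  | 0, D, q => (q 0 - q D)/2
  | (k+1), D, q => bC k (D - 2) (redQ D q)

lemma Vd_succ (D k s : ℕ) (hD : 2 ≤ D) (hs : 1 ≤ s) :
    Vd D (k+1) s = Vd (D-2) k (s-1) := by
  unfold Vd
  have h1 : (k+1 ≤ s ∧ k+1+s ≤ D) ↔ (k ≤ s-1 ∧ k + (s-1) ≤ D-2) := by omega
  by_cases h : k+1 ≤ s ∧ k+1+s ≤ D
  · rw [if_pos h, if_pos (h1.mp h)]
    have e1 : D - 2*(k+1) = D - 2 - 2*k := by omega
    have e2 : s - (k+1) = s - 1 - k := by omega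
    rw [e1, e2]
  · rw [if_neg h, if_neg (fun hc => h (h1.mpr hc))]

lemma Wd_succ (D k s : ℕ) (hD : 2 ≤ D) (hs : 1 ≤ s) :
    Wd D (k+1) s = Wd (D-2) k (s-1) := by
  unfold Wd
  have h1 : (k+1 ≤ s ∧ k+1+s ≤ D) ↔ (k ≤ s-1 ∧ k + (s-1) ≤ D-2) := by omega
  by_cases h : k+1 ≤ s ∧ k+1+s ≤ D
  · rw [if_pos h, if_pos (h1.mp h)]
    have e3 : (s = k+1) ↔ (s - 1 = k) := by omega
    have e4 : D - 2*(k+1) - 1 = D - 2 - 2*k - 1 := by omega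
    have e5 : s - (k+1) - 1 = s - 1 - k - 1 := by omega
    have e1 : D - 2*(k+1) = D - 2 - 2*k := by omega
    have e2 : s - (k+1) = s - 1 - k := by omega
    rw [e4, e5, e1, e2, if_congr e3 rfl rfl]
  · rw [if_neg h, if_neg (fun hc => h (h1.mpr hc))]

lemma Vd_zero_right (D k : ℕ) (hk : 1 ≤ k) : Vd D k 0 = 0 := by
  unfold Vd; rw [if_neg (by omega)]

lemma Wd_zero_right (D k : ℕ) (hk : 1 ≤ k) : Wd D k 0 = 0 := by
  unfold Wd; rw [if_neg (by omega)]

lemma Vd_top (D k : ℕ) (hk : 1 ≤ k) : Vd D k D = 0 := by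
  unfold Vd; rw [if_neg (by omega)]

lemma Wd_top (D k : ℕ) (hk : 1 ≤ k) : Wd D k D = 0 := by
  unfold Wd; rw [if_neg (by omega)]

/-- Core representation lemma on a single diagonal. -/
lemma rep_core : ∀ D : ℕ, ∀ q : ℕ → ℂ, ∀ s : ℕ, s ≤ D →
    q s = (∑ k ∈ Finset.range (D/2 + 1), aC k D q * Vd D k s)
      + ∑ k ∈ Finset.range ((D+1)/2), bC k D q * Wd D k s := by
  intro D
  induction D using Nat.strong_induction_on with
  | _ D ih =>
  intro q s hs
  rcases Nat.eq_zero_or_pos D with hD0 | hD1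
  · subst hD0
    interval_cases s
    simp only [Finset.range_one, Finset.sum_singleton, Nat.zero_div, Nat.zero_add,
      Finset.range_zero, Finset.sum_empty, add_zero]
    have hV : Vd 0 0 0 = 1 := by unfold Vd; rw [if_pos (by omega)]; simp
    rw [hV]
    simp only [aC]; ring
  · -- D ≥ 1 : peel k = 0
    have hodd : (D+1)/2 = (D-1)/2 + 1 := by omega
    rw [hodd, Finset.sum_range_succ', Finset.sum_range_succ']
    rcases Nat.eq_zero_or_pos s with hs0 | hs1
    · subst hs0
      rw [Finset.sum_eq_zero (fun k _ => by rw [Vd_zero_right D (k+1) (by omega)]; ring),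
          Finset.sum_eq_zero (fun k _ => by rw [Wd_zero_right D (k+1) (by omega)]; ring)]
      have hV : Vd D 0 0 = 1 := by unfold Vd; rw [if_pos (by omega)]; simp
      have hW : Wd D 0 0 = 1 := by
        unfold Wd; rw [if_pos (by omega), if_pos rfl]; simp
      rw [hV, hW]
      simp only [aC, bC]; ring
    · rcases eq_or_lt_of_le hs with hsD | hsD
      · rw [hsD]
        rw [Finset.sum_eq_zero (fun k _ => by rw [Vd_top D (k+1) (by omega)]; ring),
            Finset.sum_eq_zero (fun k _ => by rw [Wd_top D (k+1) (by omega)]; ring)]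
        have hV : Vd D 0 D = 1 := by
          unfold Vd; rw [if_pos (by omega)]; simp [Nat.choose_self]
        have hW : Wd D 0 D = -1 := by
          unfold Wd; rw [if_pos (by omega), if_neg (by omega)]
          simp only [mul_zero, Nat.sub_zero, Nat.choose_self]
          norm_num
        rw [hV, hW]
        simp only [aC, bC]; ring
      · -- 1 ≤ s < D, so D ≥ 2
        have hD2 : 2 ≤ D := by omega
        have heq1 : ∀ k ∈ Finset.range (D/2), aC (k+1) D q * Vd D (k+1) s
            = aC k (D-2) (redQ D q) * Vd (D-2) k (s-1) := by
          intro k _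
          rw [Vd_succ D k s hD2 hs1]; rfl
        have heq2 : ∀ k ∈ Finset.range ((D-1)/2), bC (k+1) D q * Wd D (k+1) s
            = bC k (D-2) (redQ D q) * Wd (D-2) k (s-1) := by
          intro k _
          rw [Wd_succ D k s hD2 hs1]; rfl
        rw [Finset.sum_congr rfl heq1, Finset.sum_congr rfl heq2]
        have hr1 : D/2 = (D-2)/2 + 1 := by omega
        have hr2 : (D-1)/2 = ((D-2)+1)/2 := by omega
        rw [hr1, hr2]
        have hIH := ih (D-2) (by omega) (redQ D q) (s-1) (by omega)
        have hV : Vd D 0 s = (D.choose s : ℂ) := by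
          unfold Vd; rw [if_pos (by omega)]
          simp only [mul_zero, Nat.sub_zero]
        have hW : Wd D 0 s = (D.choose s : ℂ) - 2 * ((D-1).choose (s-1) : ℂ) := by
          unfold Wd; rw [if_pos (by omega), if_neg (by omega)]
          simp only [mul_zero, Nat.sub_zero]
        rw [hV, hW]
        have hred : redQ D q (s-1) = q s - (q 0 + q D)/2 * (D.choose s : ℂ)
            - (q 0 - q D)/2 * ((D.choose s : ℂ) - 2 * ((D-1).choose (s-1) : ℂ)) := by
          unfold redQ
          have e : s - 1 + 1 = s := by omega
          rw [e]
        simp only [aC, bC]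
        linear_combination hIH - hred

/-- Core uniqueness lemma on a single diagonal. -/
lemma uniq_core : ∀ D : ℕ, ∀ a b : ℕ → ℂ,
    (∀ s ≤ D, (∑ k ∈ Finset.range (D/2 + 1), a k * Vd D k s)
      + ∑ k ∈ Finset.range ((D+1)/2), b k * Wd D k s = 0) →
    (∀ k ≤ D/2, a k = 0) ∧ (∀ k, 2*k+1 ≤ D → b k = 0) := by
  intro D
  induction D using Nat.strong_induction_on with
  | _ D ih =>
  intro a b h
  rcases Nat.eq_zero_or_pos D with hD0 | hD1
  · subst hD0
    have hV : Vd 0 0 0 = 1 := by unfold Vd; rw [if_pos (by omega)]; simp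
    have h0 := h 0 le_rfl
    norm_num [hV] at h0
    exact ⟨fun k hk => by interval_cases k; exact h0, fun k hk => by omega⟩
  · have hodd : (D+1)/2 = (D-1)/2 + 1 := by omega
    have hV0 : Vd D 0 0 = 1 := by unfold Vd; rw [if_pos (by omega)]; simp
    have hW0 : Wd D 0 0 = 1 := by unfold Wd; rw [if_pos (by omega), if_pos rfl]; simp
    have hVD : Vd D 0 D = 1 := by
      unfold Vd; rw [if_pos (by omega)]; simp [Nat.choose_self]
    have hWD : Wd D 0 D = -1 := by
      unfold Wd; rw [if_pos (by omega), if_neg (by omega)]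
      simp only [mul_zero, Nat.sub_zero, Nat.choose_self]
      norm_num
    have h0 := h 0 (by omega)
    rw [hodd, Finset.sum_range_succ', Finset.sum_range_succ',
        Finset.sum_eq_zero (fun k _ => by rw [Vd_zero_right D (k+1) (by omega)]; ring),
        Finset.sum_eq_zero (fun k _ => by rw [Wd_zero_right D (k+1) (by omega)]; ring),
        hV0, hW0] at h0
    have hD' := h D le_rfl
    rw [hodd, Finset.sum_range_succ', Finset.sum_range_succ',
        Finset.sum_eq_zero (fun k _ => by rw [Vd_top D (k+1) (by omega)]; ring),
        Finset.sum_eq_zero (fun k _ => by rw [Wd_top D (k+1) (by omega)]; ring),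
        hVD, hWD] at hD'
    have ha0 : a 0 = 0 := by linear_combination (h0 + hD')/2
    have hb0 : b 0 = 0 := by linear_combination (h0 - hD')/2
    by_cases hD2 : 2 ≤ D
    · have key : ∀ s' ≤ D - 2,
          (∑ k ∈ Finset.range ((D-2)/2 + 1), a (k+1) * Vd (D-2) k s')
            + ∑ k ∈ Finset.range (((D-2)+1)/2), b (k+1) * Wd (D-2) k s' = 0 := by
        intro s' hs'
        have hκ := h (s'+1) (by omega)
        rw [hodd, Finset.sum_range_succ', Finset.sum_range_succ', ha0, hb0,
            zero_mul, zero_mul, add_zero, add_zero] at hκ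
        have heq1 : ∀ k ∈ Finset.range (D/2), a (k+1) * Vd D (k+1) (s'+1)
            = a (k+1) * Vd (D-2) k s' := by
          intro k _
          have := Vd_succ D k (s'+1) hD2 (by omega)
          simp only [Nat.add_sub_cancel] at this
          rw [this]
        have heq2 : ∀ k ∈ Finset.range ((D-1)/2), b (k+1) * Wd D (k+1) (s'+1)
            = b (k+1) * Wd (D-2) k s' := by
          intro k _
          have := Wd_succ D k (s'+1) hD2 (by omega)
          simp only [Nat.add_sub_cancel] at this
          rw [this]
        rw [Finset.sum_congr rfl heq1, Finset.sum_congr rfl heq2] at hκ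
        have hr1 : D/2 = (D-2)/2 + 1 := by omega
        have hr2 : (D-1)/2 = ((D-2)+1)/2 := by omega
        rw [hr1, hr2] at hκ
        exact hκ
      have hind := ih (D-2) (by omega) (fun k => a (k+1)) (fun k => b (k+1)) key
      constructor
      · intro k hk
        cases k with
        | zero => exact ha0
        | succ k => exact hind.1 k (by omega)
      · intro k hk
        cases k with
        | zero => exact hb0
        | succ k => exact hind.2 k (by omega)
    · constructor
      · intro k hk
        have : k = 0 := by omega
        rw [this]; exact ha0
      · intro k hk
        have : k = 0 := by omega
        rw [this]; exact hb0

section Integr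

instance inst_s4 : IsFiniteMeasure μ01 := by
  constructor
  rw [μ01, Measure.restrict_apply_univ, Real.volume_Ioo]
  norm_num

lemma MemL1.add {f g : ℝ → ℂ} (hf : MemL1 f) (hg : MemL1 g) :
    MemL1 (fun x => f x + g x) := Integrable.add hf hg

lemma MemL1.sub {f g : ℝ → ℂ} (hf : MemL1 f) (hg : MemL1 g) :
    MemL1 (fun x => f x - g x) := Integrable.sub hf hg

lemma MemL1.div_const {f : ℝ → ℂ} (hf : MemL1 f) (c : ℂ) :
    MemL1 (fun x => f x / c) := Integrable.div_const hf c

lemma MemL1.mul_const {f : ℝ → ℂ} (hf : MemL1 f) (c : ℂ) :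
    MemL1 (fun x => f x * c) := Integrable.mul_const hf c

lemma MemL2.memL1 {f : ℝ → ℂ} (hf : MemL2 f) : MemL1 f := by
  have h1 : MeasureTheory.MemLp f 1 μ01 :=
    MemLp.mono_exponent hf (by norm_num)
  exact (memLp_one_iff_integrable.mp h1)

lemma memL1_aC (k : ℕ) : ∀ (D : ℕ) (q : ℕ → ℝ → ℂ), (∀ s, MemL1 (q s)) →
    MemL1 (fun x => aC k D (fun s => q s x)) := by
  induction k with
  | zero =>
    intro D q hq
    simp only [aC]
    exact ((hq 0).add (hq D)).div_const 2
  | succ k ihk =>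
    intro D q hq
    simp only [aC]
    exact ihk (D-2) (fun s x => redQ D (fun t => q t x) s) (by
      intro s
      unfold redQ
      exact ((((hq (s+1)).sub ((((hq 0).add (hq D)).div_const 2).mul_const _))).sub
        ((((hq 0).sub (hq D)).div_const 2).mul_const _)))

lemma memL1_bC (k : ℕ) : ∀ (D : ℕ) (q : ℕ → ℝ → ℂ), (∀ s, MemL1 (q s)) →
    MemL1 (fun x => bC k D (fun s => q s x)) := by
  induction k with
  | zero =>
    intro D q hq
    simp only [bC]
    exact ((hq 0).sub (hq D)).div_const 2
  | succ k ihk =>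
    intro D q hq
    simp only [bC]
    exact ihk (D-2) (fun s x => redQ D (fun t => q t x) s) (by
      intro s
      unfold redQ
      exact ((((hq (s+1)).sub ((((hq 0).add (hq D)).div_const 2).mul_const _))).sub
        ((((hq 0).sub (hq D)).div_const 2).mul_const _)))

lemma MemL2.add {f g : ℝ → ℂ} (hf : MemL2 f) (hg : MemL2 g) :
    MemL2 (fun x => f x + g x) := MemLp.add hf hg

lemma MemL2.sub {f g : ℝ → ℂ} (hf : MemL2 f) (hg : MemL2 g) :
    MemL2 (fun x => f x - g x) := MemLp.sub hf hg

lemma MemL2.div_const {f : ℝ → ℂ} (hf : MemL2 f) (c : ℂ) :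
    MemL2 (fun x => f x / c) := by
  have h := MemLp.const_mul hf c⁻¹
  have he : (fun x => f x / c) = (fun x => c⁻¹ * f x) := by
    funext x; rw [div_eq_inv_mul]
  rw [MemL2, he]
  exact h

end Integr

section Glue

def DDg (m d : ℕ) : ℕ := min d (2*m - d)

def qd (m : ℕ) (Q : ℕ → ℕ → ℝ → ℂ) (d s : ℕ) : ℝ → ℂ :=
  if s + (d - m) ≤ m then Q (s + (d - m)) (d - (s + (d - m))) else 0

def tauF (m : ℕ) (Q : ℕ → ℕ → ℝ → ℂ) (ν i : ℕ) : ℝ → ℂ :=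
  if ν % 2 = 0 then
    fun x => aC (ν/2 - (2*(ν/2) + i - m)) (DDg m (2*(ν/2) + i))
      (fun s => qd m Q (2*(ν/2) + i) s x)
  else
    fun x => bC (ν/2 - (2*(ν/2) + 1 + i - m)) (DDg m (2*(ν/2) + 1 + i))
      (fun s => qd m Q (2*(ν/2) + 1 + i) s x)

lemma chiN_even (m k i r c : ℕ) :
    ((chiN m (2*k) i r c : ℝ) : ℂ)
      = if r ≤ m ∧ c ≤ m ∧ k ≤ r ∧ k ≤ c ∧ (r - k) + (c - k) = i
        then (i.choose (r - k) : ℂ) else 0 := by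
  have h1 : (2*k) % 2 = 0 := by omega
  have h2 : (2*k) / 2 = k := by omega
  unfold chiN
  rw [h1, h2]
  split_ifs <;> push_cast <;> first | ring1 | (exfalso; omega)

lemma chiN_odd (m k i r c : ℕ) :
    ((chiN m (2*k+1) i r c : ℝ) : ℂ)
      = if r ≤ m ∧ c ≤ m ∧ k ≤ r ∧ k ≤ c ∧ (r - k) + (c - k) = i + 1
        then ((i+1).choose (r - k) : ℂ)
          - 2 * (if r - k = 0 then 0 else (i.choose (r - k - 1) : ℂ)) else 0 := by
  have h1 : ¬ ((2*k+1) % 2 = 0) := by omega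
  have h2 : (2*k+1) / 2 = k := by omega
  unfold chiN
  rw [h2, if_neg h1]
  split_ifs <;> push_cast <;> first | ring1 | (exfalso; omega)

lemma innerEven (m r c k : ℕ) (hr : r ≤ m) (hc : c ≤ m) (t : ℕ → ℂ) :
    ∑ i ∈ Finset.range (iOrd m (2*k) + 1), t i * ((chiN m (2*k) i r c : ℝ) : ℂ)
      = if (r + c) - m ≤ k ∧ k ≤ r ∧ k ≤ c
        then t ((r+c) - 2*k) * ((((r+c) - 2*k).choose (r - k) : ℕ) : ℂ) else 0 := by
  have hio : iOrd m (2*k) = m - k := by unfold iOrd; omega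
  by_cases h : (r + c) - m ≤ k ∧ k ≤ r ∧ k ≤ c
  · rw [if_pos h, Finset.sum_eq_single ((r+c) - 2*k)]
    · rw [chiN_even, if_pos ⟨hr, hc, h.2.1, h.2.2, by omega⟩]
    · intro i hi hne
      rw [chiN_even, if_neg (by rintro ⟨-, -, h3, h4, h5⟩; exact hne (by omega)), mul_zero]
    · intro hmem
      exfalso
      apply hmem
      rw [hio, Finset.mem_range]
      omega
  · rw [if_neg h, Finset.sum_eq_zero]
    intro i hi
    rw [hio, Finset.mem_range] at hi
    rw [chiN_even, if_neg (by rintro ⟨-, -, h3, h4, h5⟩; omega), mul_zero]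

lemma innerOdd (m r c k : ℕ) (hr : r ≤ m) (hc : c ≤ m) (t : ℕ → ℂ) :
    ∑ i ∈ Finset.range (iOrd m (2*k+1) + 1), t i * ((chiN m (2*k+1) i r c : ℝ) : ℂ)
      = if (r + c) - m ≤ k ∧ k ≤ r ∧ k ≤ c ∧ 2*k + 1 ≤ r + c
        then t ((r+c) - 2*k - 1) * ((((r+c) - 2*k).choose (r - k) : ℕ) : ℂ)
          - t ((r+c) - 2*k - 1) * (2 * (if r - k = 0 then 0
              else ((((r+c) - 2*k - 1).choose (r - k - 1) : ℕ) : ℂ))) else 0 := by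
  have hio : iOrd m (2*k+1) = m - k - 1 := by unfold iOrd; omega
  by_cases h : (r + c) - m ≤ k ∧ k ≤ r ∧ k ≤ c ∧ 2*k + 1 ≤ r + c
  · rw [if_pos h, Finset.sum_eq_single ((r+c) - 2*k - 1)]
    · rw [chiN_odd, if_pos ⟨hr, hc, h.2.1, h.2.2.1, by omega⟩]
      have e1 : (r + c) - 2*k - 1 + 1 = (r + c) - 2*k := by omega
      rw [e1]
      ring
    · intro i hi hne
      rw [chiN_odd, if_neg (by rintro ⟨-, -, h3, h4, h5⟩; exact hne (by omega)), mul_zero]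
    · intro hmem
      exfalso
      apply hmem
      rw [hio, Finset.mem_range]
      omega
  · rw [if_neg h, Finset.sum_eq_zero]
    intro i hi
    rw [hio, Finset.mem_range] at hi
    rw [chiN_odd, if_neg (by rintro ⟨-, -, h3, h4, h5⟩; omega), mul_zero]

lemma sum_range_even_odd (M : ℕ) (f : ℕ → ℂ) :
    ∑ ν ∈ Finset.range (2*M), f ν = ∑ k ∈ Finset.range M, (f (2*k) + f (2*k+1)) := by
  induction M with
  | zero => simp
  | succ M ih =>
    have h2 : 2*(M+1) = (2*M+1)+1 := by ring
    rw [h2, Finset.sum_range_succ, Finset.sum_range_succ, ih, Finset.sum_range_succ]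
    ring

lemma sum_shift (M n k₀ : ℕ) (G : ℕ → ℂ) (hsub : ∀ x < n, x + k₀ < M)
    (hz : ∀ k < M, (k < k₀ ∨ n + k₀ ≤ k) → G k = 0) :
    ∑ k ∈ Finset.range M, G k = ∑ k' ∈ Finset.range n, G (k' + k₀) := by
  have hmap := Finset.sum_map (Finset.range n)
    ⟨fun x => x + k₀, fun a b h => by simp only [] at h; omega⟩ G
  change _ = ∑ x ∈ Finset.range n, G (x + k₀) at hmap
  rw [← hmap]
  refine (Finset.sum_subset ?_ ?_).symm
  · intro x hx
    rw [Finset.mem_map] at hx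
    obtain ⟨a, ha, rfl⟩ := hx
    rw [Finset.mem_range] at ha ⊢
    exact hsub a ha
  · intro k hk hnk
    rw [Finset.mem_range] at hk
    apply hz k hk
    by_contra hcon
    apply hnk
    rw [Finset.mem_map]
    refine ⟨k - k₀, ?_, by show k - k₀ + k₀ = k; omega⟩
    rw [Finset.mem_range]
    omega

lemma sumEven (m r c : ℕ) (hm : 1 ≤ m) (hr : r ≤ m) (hc : c ≤ m) (hd : r + c < 2*m)
    (t : ℕ → ℕ → ℂ) :
    (∑ k ∈ Finset.range m, if (r + c) - m ≤ k ∧ k ≤ r ∧ k ≤ c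
        then t (2*k) ((r+c) - 2*k) * ((((r+c) - 2*k).choose (r - k) : ℕ) : ℂ) else 0)
      = ∑ k ∈ Finset.range (DDg m (r+c) / 2 + 1),
          t (2*(k + ((r+c) - m))) ((r+c) - 2*(k + ((r+c) - m)))
            * Vd (DDg m (r+c)) k (r - ((r+c) - m)) := by
  have hDk : DDg m (r+c) + 2*((r+c) - m) = r + c := by simp only [DDg]; omega
  rw [sum_shift m (DDg m (r+c)/2 + 1) ((r+c) - m) _ (by intro x hx; omega)
    (by intro k hk hor; rw [if_neg (by omega)])]
  apply Finset.sum_congr rfl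
  intro k' hk'
  rw [Finset.mem_range] at hk'
  unfold Vd
  by_cases hcnd : k' + ((r+c) - m) ≤ r ∧ k' + ((r+c) - m) ≤ c
  · rw [if_pos (by omega : (r+c) - m ≤ k' + ((r+c)-m) ∧ k' + ((r+c)-m) ≤ r ∧ k' + ((r+c)-m) ≤ c),
       if_pos (by omega : k' ≤ r - ((r+c)-m) ∧ k' + (r - ((r+c)-m)) ≤ DDg m (r+c))]
    have e1 : DDg m (r+c) - 2*k' = (r+c) - 2*(k' + ((r+c)-m)) := by omega
    have e2 : (r - ((r+c)-m)) - k' = r - (k' + ((r+c)-m)) := by omega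
    rw [e1, e2]
  · rw [if_neg (by omega), if_neg (by omega), mul_zero]

lemma sumOdd (m r c : ℕ) (hm : 1 ≤ m) (hr : r ≤ m) (hc : c ≤ m) (hd : r + c < 2*m)
    (t : ℕ → ℕ → ℂ) :
    (∑ k ∈ Finset.range m, if (r + c) - m ≤ k ∧ k ≤ r ∧ k ≤ c ∧ 2*k + 1 ≤ r + c
        then t (2*k+1) ((r+c) - 2*k - 1) * ((((r+c) - 2*k).choose (r - k) : ℕ) : ℂ)
          - t (2*k+1) ((r+c) - 2*k - 1) * (2 * (if r - k = 0 then 0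
              else ((((r+c) - 2*k - 1).choose (r - k - 1) : ℕ) : ℂ))) else 0)
      = ∑ k ∈ Finset.range ((DDg m (r+c) + 1) / 2),
          t (2*(k + ((r+c) - m)) + 1) ((r+c) - 2*(k + ((r+c) - m)) - 1)
            * Wd (DDg m (r+c)) k (r - ((r+c) - m)) := by
  have hDk : DDg m (r+c) + 2*((r+c) - m) = r + c := by simp only [DDg]; omega
  rw [sum_shift m ((DDg m (r+c) + 1)/2) ((r+c) - m) _ (by intro x hx; omega)
    (by intro k hk hor; rw [if_neg (by omega)])]
  apply Finset.sum_congr rfl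
  intro k' hk'
  rw [Finset.mem_range] at hk'
  unfold Wd
  by_cases hcnd : k' + ((r+c) - m) ≤ r ∧ k' + ((r+c) - m) ≤ c
  · rw [if_pos (by omega : (r+c) - m ≤ k' + ((r+c)-m) ∧ k' + ((r+c)-m) ≤ r
        ∧ k' + ((r+c)-m) ≤ c ∧ 2*(k' + ((r+c)-m)) + 1 ≤ r + c),
       if_pos (by omega : k' ≤ r - ((r+c)-m) ∧ k' + (r - ((r+c)-m)) ≤ DDg m (r+c))]
    have e3 : DDg m (r+c) - 2*k' - 1 = (r+c) - 2*(k' + ((r+c)-m)) - 1 := by omega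
    have e4 : (r - ((r+c)-m)) - k' - 1 = r - (k' + ((r+c)-m)) - 1 := by omega
    have e1 : DDg m (r+c) - 2*k' = (r+c) - 2*(k' + ((r+c)-m)) := by omega
    have e2 : (r - ((r+c)-m)) - k' = r - (k' + ((r+c)-m)) := by omega
    have e5 : ((r - ((r+c)-m)) = k') ↔ (r - (k' + ((r+c)-m)) = 0) := by omega
    rw [e3, e4, e1, e2, if_congr e5 rfl rfl]
    ring
  · rw [if_neg (by omega), if_neg (by omega), mul_zero]

lemma stepA (m r c : ℕ) (hm : 1 ≤ m) (hr : r ≤ m) (hc : c ≤ m) (hd : r + c < 2*m)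
    (t : ℕ → ℕ → ℂ) :
    ∑ ν ∈ Finset.range (2*m), ∑ i ∈ Finset.range (iOrd m ν + 1),
        t ν i * ((chiN m ν i r c : ℝ) : ℂ)
      = (∑ k ∈ Finset.range (DDg m (r+c)/2 + 1),
          t (2*(k + ((r+c)-m))) ((r+c) - 2*(k + ((r+c)-m)))
            * Vd (DDg m (r+c)) k (r - ((r+c)-m)))
        + ∑ k ∈ Finset.range ((DDg m (r+c)+1)/2),
          t (2*(k + ((r+c)-m)) + 1) ((r+c) - 2*(k + ((r+c)-m)) - 1)
            * Wd (DDg m (r+c)) k (r - ((r+c)-m)) := by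
  rw [sum_range_even_odd m _, Finset.sum_add_distrib]
  congr 1
  · rw [Finset.sum_congr rfl (fun k _ => innerEven m r c k hr hc (t (2*k)))]
    exact sumEven m r c hm hr hc hd t
  · rw [Finset.sum_congr rfl (fun k _ => innerOdd m r c k hr hc (t (2*k+1)))]
    exact sumOdd m r c hm hr hc hd t

lemma tauF_even (m : ℕ) (Q : ℕ → ℕ → ℝ → ℂ) (d k' : ℕ) (h1 : d < 2*m)
    (h2 : 2*k' ≤ DDg m d) :
    tauF m Q (2*(k' + (d - m))) (d - 2*(k' + (d - m)))
      = fun x => aC k' (DDg m d) (fun s => qd m Q d s x) := by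
  have hDk : DDg m d + 2*(d - m) = d := by simp only [DDg]; omega
  have hpar : (2*(k' + (d - m))) % 2 = 0 := by omega
  have hdiv : (2*(k' + (d - m))) / 2 = k' + (d - m) := by omega
  unfold tauF
  rw [if_pos hpar, hdiv]
  have e1 : 2*(k' + (d - m)) + (d - 2*(k' + (d - m))) = d := by omega
  rw [e1]
  have e2 : k' + (d - m) - (d - m) = k' := by omega
  rw [e2]

lemma tauF_odd (m : ℕ) (Q : ℕ → ℕ → ℝ → ℂ) (d k' : ℕ) (h1 : d < 2*m)
    (h2 : 2*k' + 1 ≤ DDg m d) :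
    tauF m Q (2*(k' + (d - m)) + 1) (d - 2*(k' + (d - m)) - 1)
      = fun x => bC k' (DDg m d) (fun s => qd m Q d s x) := by
  have hDk : DDg m d + 2*(d - m) = d := by simp only [DDg]; omega
  have hpar : ¬ ((2*(k' + (d - m)) + 1) % 2 = 0) := by omega
  have hdiv : (2*(k' + (d - m)) + 1) / 2 = k' + (d - m) := by omega
  unfold tauF
  rw [if_neg hpar, hdiv]
  have e1 : 2*(k' + (d - m)) + 1 + (d - 2*(k' + (d - m)) - 1) = d := by omega
  rw [e1]
  have e2 : k' + (d - m) - (d - m) = k' := by omega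
  rw [e2]

lemma qd_eval (m : ℕ) (Q : ℕ → ℕ → ℝ → ℂ) (r c : ℕ) (hr : r ≤ m) (hc : c ≤ m) :
    qd m Q (r + c) (r - ((r+c) - m)) = Q r c := by
  unfold qd
  rw [if_pos (by omega)]
  have e1 : r - ((r+c) - m) + ((r+c) - m) = r := by omega
  rw [e1]
  have e2 : (r + c) - r = c := by omega
  rw [e2]

/-- The pointwise representation identity. -/
lemma rep_eq (m : ℕ) (hm : 1 ≤ m) (Q : ℕ → ℕ → ℝ → ℂ) (hQmm : Q m m = 0) :
    ∀ x : ℝ, ∀ r ≤ m, ∀ c ≤ m,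
      Q r c x = ∑ ν ∈ Finset.range (2*m), ∑ i ∈ Finset.range (iOrd m ν + 1),
        tauF m Q ν i x * ((chiN m ν i r c : ℝ) : ℂ) := by
  intro x r hr c hc
  by_cases hd : r + c < 2*m
  · rw [stepA m r c hm hr hc hd (fun ν i => tauF m Q ν i x)]
    have hDk : DDg m (r+c) + 2*((r+c) - m) = r + c := by simp only [DDg]; omega
    have hV : ∀ k ∈ Finset.range (DDg m (r+c)/2 + 1),
        tauF m Q (2*(k + ((r+c)-m))) ((r+c) - 2*(k + ((r+c)-m))) x
            * Vd (DDg m (r+c)) k (r - ((r+c)-m))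
          = aC k (DDg m (r+c)) (fun s => qd m Q (r+c) s x)
            * Vd (DDg m (r+c)) k (r - ((r+c)-m)) := by
      intro k hk
      rw [Finset.mem_range] at hk
      rw [tauF_even m Q (r+c) k hd (by omega)]
    have hW : ∀ k ∈ Finset.range ((DDg m (r+c) + 1)/2),
        tauF m Q (2*(k + ((r+c)-m)) + 1) ((r+c) - 2*(k + ((r+c)-m)) - 1) x
            * Wd (DDg m (r+c)) k (r - ((r+c)-m))
          = bC k (DDg m (r+c)) (fun s => qd m Q (r+c) s x)
            * Wd (DDg m (r+c)) k (r - ((r+c)-m)) := by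
      intro k hk
      rw [Finset.mem_range] at hk
      rw [tauF_odd m Q (r+c) k hd (by omega)]
    rw [Finset.sum_congr rfl hV, Finset.sum_congr rfl hW]
    have hcore := rep_core (DDg m (r+c)) (fun s => qd m Q (r+c) s x)
      (r - ((r+c)-m)) (by omega)
    rw [← hcore]
    exact (congrFun (qd_eval m Q r c hr hc) x).symm
  · have hrm : r = m := by omega
    have hcm : c = m := by omega
    rw [hrm, hcm, hQmm]
    simp only [Pi.zero_apply]
    rw [sum_range_even_odd m _]
    symm
    apply Finset.sum_eq_zero
    intro k hk
    rw [Finset.mem_range] at hk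
    rw [innerEven m m m k le_rfl le_rfl (fun i => tauF m Q (2*k) i x),
        innerOdd m m m k le_rfl le_rfl (fun i => tauF m Q (2*k+1) i x),
        if_neg (by omega), if_neg (by omega), add_zero]

lemma memL1_zero : MemL1 (fun _ => (0:ℂ)) := by
  exact MeasureTheory.integrable_zero _ _ _

lemma qd_memL1 (m : ℕ) (Q : ℕ → ℕ → ℝ → ℂ) (d : ℕ) (hm : 1 ≤ m) (hd : d < 2*m)
    (h1 : ∀ r j, r < m → j < m → MemL1 (Q r j))
    (h2 : ∀ r, r < m → MemL2 (Q r m))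
    (h3 : ∀ r, r < m → MemL2 (Q m r)) :
    ∀ s, MemL1 (qd m Q d s) := by
  intro s
  unfold qd
  by_cases hg : s + (d - m) ≤ m
  · rw [if_pos hg]
    by_cases hrm : s + (d - m) = m
    · rw [hrm]
      exact (h3 _ (by omega)).memL1
    · by_cases hcm : d - (s + (d - m)) = m
      · rw [hcm]
        exact (h2 _ (by omega)).memL1
      · exact h1 _ _ (by omega) (by omega)
  · rw [if_neg hg]
    exact memL1_zero

lemma tauF_memL1 (m : ℕ) (Q : ℕ → ℕ → ℝ → ℂ) (hm : 1 ≤ m)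
    (h1 : ∀ r j, r < m → j < m → MemL1 (Q r j))
    (h2 : ∀ r, r < m → MemL2 (Q r m))
    (h3 : ∀ r, r < m → MemL2 (Q m r)) :
    ∀ ν < 2*m, ∀ i < iOrd m ν, MemL1 (tauF m Q ν i) := by
  intro ν hν i hi
  have hio : iOrd m ν = m - ν/2 - ν % 2 := rfl
  unfold tauF
  by_cases hpar : ν % 2 = 0
  · rw [if_pos hpar]
    exact memL1_aC _ _ (fun s => qd m Q (2*(ν/2) + i) s)
      (qd_memL1 m Q _ hm (by omega) h1 h2 h3)
  · rw [if_neg hpar]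
    exact memL1_bC _ _ (fun s => qd m Q (2*(ν/2) + 1 + i) s)
      (qd_memL1 m Q _ hm (by omega) h1 h2 h3)

lemma tauF_top_even (m : ℕ) (Q : ℕ → ℕ → ℝ → ℂ) (k : ℕ) (hm : 1 ≤ m) (hk : k < m) :
    tauF m Q (2*k) (iOrd m (2*k)) = fun x => (Q k m x + Q m k x)/2 := by
  have hio : iOrd m (2*k) = m - k := by unfold iOrd; omega
  have hpar : (2*k) % 2 = 0 := by omega
  have hdiv : (2*k) / 2 = k := by omega
  unfold tauF
  rw [if_pos hpar, hdiv, hio]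
  have e1 : 2*k + (m - k) = m + k := by omega
  rw [e1]
  have e2 : k - (m + k - m) = 0 := by omega
  rw [e2]
  have e3 : DDg m (m + k) = m - k := by simp only [DDg]; omega
  rw [e3]
  funext x
  simp only [aC]
  unfold qd
  rw [if_pos (by omega), if_pos (by omega)]
  have i1 : 0 + (m + k - m) = k := by omega
  have i2 : m + k - (0 + (m + k - m)) = m := by omega
  have i3 : m - k + (m + k - m) = m := by omega
  have i4 : m + k - (m - k + (m + k - m)) = k := by omega
  rw [i4, i3, i2, i1]

lemma tauF_top_odd (m : ℕ) (Q : ℕ → ℕ → ℝ → ℂ) (k : ℕ) (hm : 1 ≤ m) (hk : k < m) :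
    tauF m Q (2*k+1) (iOrd m (2*k+1)) = fun x => (Q k m x - Q m k x)/2 := by
  have hio : iOrd m (2*k+1) = m - k - 1 := by unfold iOrd; omega
  have hpar : ¬((2*k+1) % 2 = 0) := by omega
  have hdiv : (2*k+1) / 2 = k := by omega
  unfold tauF
  rw [if_neg hpar, hdiv, hio]
  have e1 : 2*k + 1 + (m - k - 1) = m + k := by omega
  rw [e1]
  have e2 : k - (m + k - m) = 0 := by omega
  rw [e2]
  have e3 : DDg m (m + k) = m - k := by simp only [DDg]; omega
  rw [e3]
  funext x
  simp only [bC]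
  unfold qd
  rw [if_pos (by omega), if_pos (by omega)]
  have i1 : 0 + (m + k - m) = k := by omega
  have i2 : m + k - (0 + (m + k - m)) = m := by omega
  have i3 : m - k + (m + k - m) = m := by omega
  have i4 : m + k - (m - k + (m + k - m)) = k := by omega
  rw [i4, i3, i2, i1]

lemma tauF_top_L2 (m : ℕ) (Q : ℕ → ℕ → ℝ → ℂ) (hm : 1 ≤ m)
    (h2 : ∀ r, r < m → MemL2 (Q r m))
    (h3 : ∀ r, r < m → MemL2 (Q m r)) :
    ∀ ν < 2*m, MemL2 (tauF m Q ν (iOrd m ν)) := by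
  intro ν hν
  by_cases hpar : ν % 2 = 0
  · have hν2 : ν = 2*(ν/2) := by omega
    rw [hν2, tauF_top_even m Q (ν/2) hm (by omega)]
    exact ((h2 _ (by omega)).add (h3 _ (by omega))).div_const 2
  · have hν2 : ν = 2*(ν/2)+1 := by omega
    rw [hν2, tauF_top_odd m Q (ν/2) hm (by omega)]
    exact ((h2 _ (by omega)).sub (h3 _ (by omega))).div_const 2

lemma uniq_glue (m : ℕ) (hm : 1 ≤ m) (t : ℕ → ℕ → ℂ)
    (h : ∀ r ≤ m, ∀ c ≤ m, ∑ ν ∈ Finset.range (2*m), ∑ i ∈ Finset.range (iOrd m ν + 1),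
      t ν i * ((chiN m ν i r c : ℝ) : ℂ) = 0) :
    ∀ ν < 2*m, ∀ i ≤ iOrd m ν, t ν i = 0 := by
  intro ν hν i hi
  have hio : iOrd m ν = m - ν/2 - ν % 2 := rfl
  rw [hio] at hi
  set d := 2*(ν/2) + ν % 2 + i with hd
  have hνd : ν % 2 = 0 ∨ ν % 2 = 1 := by omega
  have hd2m : d < 2*m := by omega
  have hDk : DDg m d + 2*(d - m) = d := by simp only [DDg]; omega
  have key : ∀ s ≤ DDg m d,
      (∑ k ∈ Finset.range (DDg m d/2 + 1),
        t (2*(k + (d-m))) (d - 2*(k + (d-m))) * Vd (DDg m d) k s)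
        + ∑ k ∈ Finset.range ((DDg m d + 1)/2),
          t (2*(k + (d-m)) + 1) (d - 2*(k + (d-m)) - 1) * Wd (DDg m d) k s = 0 := by
    intro s hs
    have hr : s + (d - m) ≤ m := by omega
    have hc : d - (s + (d - m)) ≤ m := by omega
    have hrc := h (s + (d - m)) hr (d - (s + (d - m))) hc
    rw [stepA m (s + (d - m)) (d - (s + (d - m))) hm hr hc (by omega) t] at hrc
    have e1 : (s + (d - m)) + (d - (s + (d - m))) = d := by omega
    rw [e1] at hrc
    have e2 : s + (d - m) - (d - m) = s := by omega
    rw [e2] at hrc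
    exact hrc
  have huq := uniq_core (DDg m d) _ _ key
  by_cases hpar : ν % 2 = 0
  · have hz := huq.1 ((ν/2) - (d - m)) (by omega)
    have e2 : d - 2*(((ν/2) - (d - m)) + (d - m)) = i := by omega
    have e1 : 2*(((ν/2) - (d - m)) + (d - m)) = ν := by omega
    rw [e2, e1] at hz
    exact hz
  · have hz := huq.2 ((ν/2) - (d - m)) (by omega)
    have e2 : d - 2*(((ν/2) - (d - m)) + (d - m)) - 1 = i := by omega
    have e1 : 2*(((ν/2) - (d - m)) + (d - m)) + 1 = ν := by omega
    rw [e2, e1] at hz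
    exact hz

end Glue

/-- Every `Q ∈ 𝔔_n` (`n = 2m`) admits a representation
`Q(x) = ∑_{ν=0}^{n-1} ∑_{i=0}^{i_ν} τ_{ν,i}(x) χ_{ν,i}` with `τ_{ν,i_ν} ∈ L²`,
`τ_{ν,i} ∈ L¹` for `i < i_ν`, and the coefficients `τ_{ν,i}` are determined
almost everywhere by `Q`. -/
theorem rep_exists_unique_even (m : ℕ) (hm : 1 ≤ m)
    (Q : ℕ → ℕ → ℝ → ℂ) (hQ : MemQE m Q) :
    (∃ τ : ℕ → ℕ → ℝ → ℂ, RepE m Q τ) ∧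
    (∀ τ τ' : ℕ → ℕ → ℝ → ℂ, RepE m Q τ → RepE m Q τ' →
      ∀ ν < 2*m, ∀ i ≤ iOrd m ν, τ ν i =ᵐ[μ01] τ' ν i) := by
  obtain ⟨hQ1, hQ2, hQ3, hQ4, hQ5⟩ := hQ
  constructor
  · refine ⟨tauF m Q, tauF_top_L2 m Q hm hQ2 hQ3, tauF_memL1 m Q hm hQ1 hQ2 hQ3, ?_⟩
    exact MeasureTheory.ae_of_all _ (rep_eq m hm Q hQ4)
  · intro τ τ' hτ hτ' ν hν i hi
    filter_upwards [hτ.2.2, hτ'.2.2] with x hx1 hx2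
    have hzero : ∀ r ≤ m, ∀ c ≤ m,
        ∑ ν ∈ Finset.range (2*m), ∑ i ∈ Finset.range (iOrd m ν + 1),
          (τ ν i x - τ' ν i x) * ((chiN m ν i r c : ℝ) : ℂ) = 0 := by
      intro r hr c hc
      simp only [sub_mul, Finset.sum_sub_distrib]
      rw [← hx1 r hr c hc, ← hx2 r hr c hc, sub_self]
    have := uniq_glue m hm (fun ν i => τ ν i x - τ' ν i x) hzero ν hν i hi
    exact sub_eq_zero.mp this
end
end

section
/- Let n = 2m+1 with m ≥ 1. Every Q ∈ 𝔔_n admits a representation Q(x) = Σ_{ν=0}^{n−1} Σ_{i=0}^{i_ν} τ_{ν,i}(x) χ_{ν,i} for a.e. x ∈ (0,1) with all coefficient functions τ_{ν,i} ∈ L¹(0,1); moreover this representation is unique, i.e. the τ_{ν,i} are determined almost everywhere by Q. -/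
open MeasureTheory Set

noncomputable section

/-- `τ` represents `Q ∈ 𝔔_n` (`n = 2m+1`): all `τ_{ν,i} ∈ L¹(0,1)` and
`Q(x) = ∑_{ν=0}^{n-1} ∑_{i=0}^{i_ν} τ_{ν,i}(x) χ_{ν,i}` a.e. on `(0,1)`. -/
def RepO (m : ℕ) (Q : ℕ → ℕ → ℝ → ℂ) (τ : ℕ → ℕ → ℝ → ℂ) : Prop :=
  (∀ ν < 2*m+1, ∀ i ≤ iOrd m ν, MemL1 (τ ν i)) ∧
  (∀ᵐ x ∂μ01, ∀ r ≤ m, ∀ c ≤ m,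
    Q r c x = ∑ ν ∈ Finset.range (2*m+1), ∑ i ∈ Finset.range (iOrd m ν + 1),
      τ ν i x * (chiN m ν i r c : ℂ))

section RepAux

lemma S_choose (i : ℕ) : ∀ A j : ℕ,
    ∑ s ∈ Finset.range (i+1), (-1:ℝ)^s * (i.choose s) * ((A+s).choose j)
      = if i ≤ j then (-1:ℝ)^i * (A.choose (j-i)) else 0 := by
  induction i with
  | zero => intro A j; simp
  | succ i ih =>
    intro A j
    have hstep : ∑ s ∈ Finset.range (i+1+1), (-1:ℝ)^s * ((i+1).choose s) * ((A+s).choose j)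
        = (∑ s ∈ Finset.range (i+1), (-1:ℝ)^s * (i.choose s) * ((A+s).choose j))
          - (∑ s ∈ Finset.range (i+1), (-1:ℝ)^s * (i.choose s) * (((A+1)+s).choose j)) := by
      rw [Finset.sum_range_succ' (fun s => (-1:ℝ)^s * ((i+1).choose s) * ((A+s).choose j)) (i+1)]
      have h1 : ∀ s, ((i+1).choose (s+1) : ℝ) = (i.choose s : ℝ) + (i.choose (s+1) : ℝ) := by
        intro s; exact_mod_cast congrArg (Nat.cast (R := ℝ)) (Nat.choose_succ_succ i s)
      -- LHS = ∑_{s<i+1} (-1)^(s+1) * (C(i,s)+C(i,s+1)) * C(A+s+1, j) + C(A,j)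
      have hW : ∑ s ∈ Finset.range (i+1), (-1:ℝ)^s * (i.choose (s+1)) * ((A+(s+1)).choose j)
          = -((∑ s ∈ Finset.range (i+1), (-1:ℝ)^s * (i.choose s) * ((A+s).choose j)) - (A.choose j : ℝ)) := by
        have e1 : ∑ s ∈ Finset.range (i+1), (-1:ℝ)^s * (i.choose s) * ((A+s).choose j)
            = (∑ s ∈ Finset.range i, (-1:ℝ)^(s+1) * (i.choose (s+1)) * ((A+(s+1)).choose j)) + (A.choose j : ℝ) := by
          rw [Finset.sum_range_succ' (fun s => (-1:ℝ)^s * (i.choose s) * ((A+s).choose j)) i]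
          simp
        have e2 : ∑ s ∈ Finset.range (i+1), (-1:ℝ)^s * (i.choose (s+1)) * ((A+(s+1)).choose j)
            = ∑ s ∈ Finset.range i, (-1:ℝ)^s * (i.choose (s+1)) * ((A+(s+1)).choose j) := by
          rw [Finset.sum_range_succ]
          simp
        rw [e2, e1, add_sub_cancel_right, ← Finset.sum_neg_distrib]
        refine Finset.sum_congr rfl (fun s _ => by ring)
      calc (∑ s ∈ Finset.range (i+1), (-1:ℝ)^(s+1) * ((i+1).choose (s+1)) * ((A+(s+1)).choose j))
            + (-1:ℝ)^0 * ((i+1).choose 0) * ((A+0).choose j)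
          = (∑ s ∈ Finset.range (i+1), ((-(-1:ℝ)^s * (i.choose s) * (((A+1)+s).choose j))
              + (-(-1:ℝ)^s * (i.choose (s+1)) * ((A+(s+1)).choose j)))) + (A.choose j : ℝ) := by
            simp only [pow_zero, Nat.choose_zero_right, Nat.cast_one, add_zero, one_mul]
            congr 1
            refine Finset.sum_congr rfl (fun s _ => ?_)
            rw [h1 s]
            have : (A+1)+s = A+(s+1) := by omega
            rw [this]
            ring
      _ = _ := by
            rw [Finset.sum_add_distrib]
            have : ∑ s ∈ Finset.range (i+1), -(-1:ℝ)^s * (i.choose (s+1)) * ((A+(s+1)).choose j)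
                = -∑ s ∈ Finset.range (i+1), (-1:ℝ)^s * (i.choose (s+1)) * ((A+(s+1)).choose j) := by
              rw [← Finset.sum_neg_distrib]; exact Finset.sum_congr rfl (fun s _ => by ring)
            rw [this, hW]
            have : ∑ s ∈ Finset.range (i+1), -(-1:ℝ)^s * (i.choose s) * (((A+1)+s).choose j)
                = -∑ s ∈ Finset.range (i+1), (-1:ℝ)^s * (i.choose s) * (((A+1)+s).choose j) := by
              rw [← Finset.sum_neg_distrib]; exact Finset.sum_congr rfl (fun s _ => by ring)
            rw [this]
            ring
    rw [hstep, ih A j, ih (A+1) j]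
    by_cases h1 : i + 1 ≤ j
    · rw [if_pos (by omega), if_pos h1, if_pos (by omega)]
      have ht : j - i = (j - (i+1)) + 1 := by omega
      have hp : ((A+1).choose (j-i) : ℝ) = (A.choose (j-(i+1)) : ℝ) + (A.choose (j-i) : ℝ) := by
        rw [ht]; exact_mod_cast congrArg (Nat.cast (R := ℝ)) (Nat.choose_succ_succ A (j-(i+1)))
      rw [hp, ht]
      ring
    · by_cases h2 : i ≤ j
      · have : i = j := by omega
        subst this
        rw [if_neg h1, if_pos le_rfl, if_pos le_rfl]
        simp
      · rw [if_neg h1, if_neg h2, if_neg h2]; ring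

lemma chiN_support {m ν i r c : ℕ}
    (h : ¬(r ≤ m ∧ c ≤ m ∧ ν/2 ≤ r ∧ ν/2 ≤ c ∧ r + c = ν + i)) : chiN m ν i r c = 0 := by
  unfold chiN
  split_ifs <;> first | rfl | (exfalso; apply h; omega)

lemma chiN_even_eval_s5 (m k i s : ℕ) (hs : s ≤ i) (him : k + i ≤ m) :
    chiN m (2*k) i (k+s) (k+(i-s)) = (i.choose s : ℝ) := by
  have h2 : (2*k) % 2 = 0 := by omega
  have h5 : (2*k)/2 = k := by omega
  unfold chiN
  rw [if_pos (by omega), h2, if_pos rfl, h5, if_pos (by omega)]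
  congr 2
  omega

lemma chiN_odd_eval_s5 (m k i s : ℕ) (hs : s ≤ i+1) (him : k + i + 1 ≤ m) :
    chiN m (2*k+1) i (k+s) (k+(i+1-s))
      = ((i+1).choose s : ℝ) - 2 * (if s = 0 then 0 else (i.choose (s-1) : ℝ)) := by
  have h2 : (2*k+1) % 2 = 1 := by omega
  have h5 : (2*k+1)/2 = k := by omega
  unfold chiN
  rw [if_pos (by omega), h2, if_neg (by omega), h5, if_pos (by omega)]
  have hks : k + s - k = s := by omega
  rw [hks]

lemma G_even (m k i i₀ : ℕ) (hk : 2*k ≤ 2*m) (hi : i ≤ iOrd m (2*k)) (hii : i₀ ≤ i) :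
    ∑ r ∈ Finset.range (min (2*k+i) m + 1),
      (-1:ℝ)^r * ((r - (2*k+i - m)).choose i₀) * chiN m (2*k) i r (2*k+i - r)
    = if i₀ = i then (-1:ℝ)^(k+i₀) else 0 := by
  have him : k + i ≤ m := by
    have : iOrd m (2*k) = m - k := by unfold iOrd; omega
    omega
  set d := 2*k+i with hd
  have hsub : Finset.Icc k (k+i) ⊆ Finset.range (min d m + 1) := by
    intro r hr; rw [Finset.mem_Icc] at hr; rw [Finset.mem_range]; omega
  rw [← Finset.sum_subset hsub (fun r hr hnr => ?_)]
  swap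
  · rw [Finset.mem_range] at hr; rw [Finset.mem_Icc] at hnr
    have : chiN m (2*k) i r (d - r) = 0 := by
      apply chiN_support; omega
    rw [this, mul_zero]
  rw [← Finset.Ico_add_one_right_eq_Icc, Finset.sum_Ico_eq_sum_range]
  have hrange : k + i + 1 - k = i + 1 := by omega
  rw [hrange]
  have hA : k - (d - m) + (d - m) = k := by omega
  set A := k - (d - m) with hAdef
  have hterm : ∀ s ∈ Finset.range (i+1),
      (-1:ℝ)^(k+s) * (((k+s) - (d - m)).choose i₀) * chiN m (2*k) i (k+s) (d - (k+s))
      = (-1:ℝ)^k * ((-1:ℝ)^s * (i.choose s) * ((A+s).choose i₀)) := by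
    intro s hs; rw [Finset.mem_range] at hs
    have h1 : d - (k+s) = k + (i - s) := by omega
    have h2 : (k+s) - (d - m) = A + s := by omega
    rw [h1, h2, chiN_even_eval_s5 m k i s (by omega) him, pow_add]
    ring
  rw [Finset.sum_congr rfl hterm, ← Finset.mul_sum, S_choose]
  by_cases h : i₀ = i
  · subst h
    rw [if_pos le_rfl, if_pos rfl]
    simp [pow_add]
  · rw [if_neg (by omega), if_neg h, mul_zero]

lemma G_odd (m k i i₀ : ℕ) (hk : 2*k+1 ≤ 2*m) (hi : i ≤ iOrd m (2*k+1)) (hii : i₀ ≤ i) :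
    ∑ r ∈ Finset.range (min (2*k+1+i) m + 1),
      (-1:ℝ)^r * ((r - (2*k+1+i - m)).choose i₀) * chiN m (2*k+1) i r (2*k+1+i - r)
    = if i₀ = i then 2*(-1:ℝ)^(k+i₀) else 0 := by
  have him : k + i + 1 ≤ m := by
    have h5 : (2*k+1)/2 = k := by omega
    have : iOrd m (2*k+1) = m - k - 1 := by unfold iOrd; omega
    omega
  set d := 2*k+1+i with hd
  have hsub : Finset.Icc k (k+i+1) ⊆ Finset.range (min d m + 1) := by
    intro r hr; rw [Finset.mem_Icc] at hr; rw [Finset.mem_range]; omega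
  rw [← Finset.sum_subset hsub (fun r hr hnr => ?_)]
  swap
  · rw [Finset.mem_range] at hr; rw [Finset.mem_Icc] at hnr
    have : chiN m (2*k+1) i r (d - r) = 0 := by
      apply chiN_support; omega
    rw [this, mul_zero]
  rw [← Finset.Ico_add_one_right_eq_Icc, Finset.sum_Ico_eq_sum_range]
  have hrange : k + i + 1 + 1 - k = i + 2 := by omega
  rw [hrange]
  set A := k - (d - m) with hAdef
  have hterm : ∀ s ∈ Finset.range (i+2),
      (-1:ℝ)^(k+s) * (((k+s) - (d - m)).choose i₀) * chiN m (2*k+1) i (k+s) (d - (k+s))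
      = (-1:ℝ)^k * ((-1:ℝ)^s * ((i+1).choose s) * ((A+s).choose i₀))
        - 2 * (-1:ℝ)^k * ((-1:ℝ)^s * ((A+s).choose i₀) * (if s = 0 then 0 else (i.choose (s-1) : ℝ))) := by
    intro s hs; rw [Finset.mem_range] at hs
    have h1 : d - (k+s) = k + (i + 1 - s) := by omega
    have h2 : (k+s) - (d - m) = A + s := by omega
    rw [h1, h2, chiN_odd_eval_s5 m k i s (by omega) him, pow_add]
    ring
  rw [Finset.sum_congr rfl hterm, Finset.sum_sub_distrib, ← Finset.mul_sum, ← Finset.mul_sum]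
  have hT : ∑ s ∈ Finset.range (i+2),
      ((-1:ℝ)^s * ((A+s).choose i₀) * (if s = 0 then 0 else (i.choose (s-1) : ℝ)))
      = - ∑ s ∈ Finset.range (i+1), (-1:ℝ)^s * (i.choose s) * (((A+1)+s).choose i₀) := by
    rw [Finset.sum_range_succ' (fun s => (-1:ℝ)^s * ((A+s).choose i₀) * (if s = 0 then 0 else (i.choose (s-1) : ℝ))) (i+1)]
    simp only [eq_self_iff_true, if_true, mul_zero, add_zero]
    refine Eq.trans (Finset.sum_congr rfl (fun s _ => ?_)) (Finset.sum_neg_distrib _)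
    have h0 : s + 1 ≠ 0 := by omega
    rw [if_neg h0]
    have h3 : s + 1 - 1 = s := by omega
    have h4 : A + (s+1) = (A+1) + s := by omega
    rw [h3, h4]
    ring
  rw [hT, S_choose, S_choose]
  by_cases h : i₀ = i
  · subst h
    rw [if_neg (by omega), if_pos le_rfl, if_pos rfl]
    simp [pow_add]
    ring
  · rw [if_neg (by omega), if_neg (by omega), if_neg h]
    ring

lemma chi_sum_ext (m : ℕ) (a : ℕ → ℕ → ℂ)
    (H : ∀ r ≤ m, ∀ c ≤ m, ∑ ν ∈ Finset.range (2*m+1), ∑ i ∈ Finset.range (iOrd m ν + 1),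
      a ν i * (chiN m ν i r c : ℂ) = 0) :
    ∀ r c, ∑ ν ∈ Finset.range (2*m+1), ∑ i ∈ Finset.range (iOrd m ν + 1),
      a ν i * (chiN m ν i r c : ℂ) = 0 := by
  intro r c
  by_cases h : r ≤ m ∧ c ≤ m
  · exact H r h.1 c h.2
  · refine Finset.sum_eq_zero (fun ν _ => Finset.sum_eq_zero (fun i _ => ?_))
    rw [chiN_support (by omega), Complex.ofReal_zero, mul_zero]

lemma chi_inj (m : ℕ) (a : ℕ → ℕ → ℂ)
    (H : ∀ r ≤ m, ∀ c ≤ m, ∑ ν ∈ Finset.range (2*m+1), ∑ i ∈ Finset.range (iOrd m ν + 1),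
      a ν i * (chiN m ν i r c : ℂ) = 0) :
    ∀ ν₀, ν₀ ≤ 2*m → ∀ i₀, i₀ ≤ iOrd m ν₀ → a ν₀ i₀ = 0 := by
  have H' := chi_sum_ext m a H
  suffices key : ∀ t, ∀ ν₀, ν₀ ≤ 2*m → 2*m < ν₀ + t → ∀ i₀, i₀ ≤ iOrd m ν₀ → a ν₀ i₀ = 0 by
    intro ν₀ h i₀ hi; exact key (2*m+1) ν₀ h (by omega) i₀ hi
  intro t
  induction t with
  | zero => intro ν₀ h1 h2; omega
  | succ t ih =>
    intro ν₀ h1 h2 i₀ hi₀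
    by_cases hlt : 2*m < ν₀ + t
    · exact ih ν₀ h1 hlt i₀ hi₀
    set d := ν₀ + i₀ with hd
    set g : ℕ → ℕ → ℂ := fun ν i => ∑ r ∈ Finset.range (min d m + 1),
      ((-1:ℂ)^r * (((r - (d-m)).choose i₀ : ℕ) : ℂ)) * (chiN m ν i r (d-r) : ℂ) with hg
    have hgr : ∀ ν i, g ν i = ((∑ r ∈ Finset.range (min d m + 1),
        (-1:ℝ)^r * (((r - (d-m)).choose i₀ : ℕ) : ℝ) * chiN m ν i r (d-r) : ℝ) : ℂ) := by
      intro ν i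
      rw [hg]
      push_cast
      rfl
    have g_offdiag : ∀ ν i, ν + i ≠ d → g ν i = 0 := by
      intro ν i hne
      refine Finset.sum_eq_zero (fun r hr => ?_)
      rw [Finset.mem_range] at hr
      rw [chiN_support (by omega), Complex.ofReal_zero, mul_zero]
    have h0 : ∑ r ∈ Finset.range (min d m + 1),
        ((-1:ℂ)^r * (((r - (d-m)).choose i₀ : ℕ) : ℂ)) *
          (∑ ν ∈ Finset.range (2*m+1), ∑ i ∈ Finset.range (iOrd m ν + 1),
            a ν i * (chiN m ν i r (d-r) : ℂ)) = 0 := by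
      refine Finset.sum_eq_zero (fun r _ => ?_)
      rw [H' r (d-r), mul_zero]
    have hswap : ∑ r ∈ Finset.range (min d m + 1),
        ((-1:ℂ)^r * (((r - (d-m)).choose i₀ : ℕ) : ℂ)) *
          (∑ ν ∈ Finset.range (2*m+1), ∑ i ∈ Finset.range (iOrd m ν + 1),
            a ν i * (chiN m ν i r (d-r) : ℂ))
        = ∑ ν ∈ Finset.range (2*m+1), ∑ i ∈ Finset.range (iOrd m ν + 1), a ν i * g ν i := by
      simp only [Finset.mul_sum]
      rw [Finset.sum_comm]
      refine Finset.sum_congr rfl (fun ν _ => ?_)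
      rw [Finset.sum_comm]
      refine Finset.sum_congr rfl (fun i _ => ?_)
      rw [hg, Finset.mul_sum]
      refine Finset.sum_congr rfl (fun r _ => ?_)
      ring
    rw [hswap] at h0
    -- reduce double sum to the single (ν₀, i₀) term
    rw [Finset.sum_eq_single_of_mem ν₀ (by rw [Finset.mem_range]; omega)] at h0
    · rw [Finset.sum_eq_single_of_mem i₀ (by rw [Finset.mem_range]; omega)] at h0
      · -- h0 : a ν₀ i₀ * g ν₀ i₀ = 0 ; show g ν₀ i₀ ≠ 0
        have hgne : g ν₀ i₀ ≠ 0 := by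
          rcases Nat.even_or_odd ν₀ with ⟨k, hk⟩ | ⟨k, hk⟩
          · have hν : ν₀ = 2*k := by omega
            subst hν
            have hG := G_even m k i₀ i₀ (by omega) hi₀ le_rfl
            rw [← hd] at hG
            rw [hgr, hG, if_pos rfl]
            simp
          · subst hk
            have hG := G_odd m k i₀ i₀ (by omega) hi₀ le_rfl
            rw [← hd] at hG
            rw [hgr, hG, if_pos rfl]
            simp
        exact (mul_eq_zero.mp h0).resolve_right hgne
      · intro i hi hne
        rw [g_offdiag ν₀ i (by omega), mul_zero]
    · intro ν hν hne
      rw [Finset.mem_range] at hν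
      refine Finset.sum_eq_zero (fun i hi => ?_)
      rw [Finset.mem_range] at hi
      by_cases hdi : ν + i = d
      · by_cases hν' : ν₀ < ν
        · rw [ih ν (by omega) (by omega) i (by omega), zero_mul]
        · -- ν < ν₀, so i > i₀
          have hii : i₀ < i := by omega
          have hgz : g ν i = 0 := by
            rcases Nat.even_or_odd ν with ⟨k, hk⟩ | ⟨k, hk⟩
            · have hνk : ν = 2*k := by omega
              subst hνk
              have hG := G_even m k i i₀ (by omega) (by omega) (le_of_lt hii)
              rw [hdi] at hG
              rw [hgr, hG, if_neg (by omega)]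
              simp
            · subst hk
              have hG := G_odd m k i i₀ (by omega) (by omega) (le_of_lt hii)
              rw [hdi] at hG
              rw [hgr, hG, if_neg (by omega)]
              simp
          rw [hgz, mul_zero]
      · rw [g_offdiag ν i hdi, mul_zero]

abbrev RepJ (m : ℕ) := (ν : Fin (2*m+1)) × Fin (iOrd m ν.1 + 1)

instance repJNonempty (m : ℕ) : Nonempty (RepJ m) :=
  ⟨⟨⟨0, by omega⟩, ⟨0, by omega⟩⟩⟩

def phiF (m : ℕ) : RepJ m → Matrix (Fin (m+1)) (Fin (m+1)) ℂ :=
  fun j => Matrix.of fun r c => (chiN m j.1 j.2 r c : ℂ)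

lemma sum_RepJ {M : Type*} [AddCommMonoid M] (m : ℕ) (F : ℕ → ℕ → M) :
    ∑ j : RepJ m, F j.1 j.2
      = ∑ ν ∈ Finset.range (2*m+1), ∑ i ∈ Finset.range (iOrd m ν + 1), F ν i := by
  rw [← Finset.univ_sigma_univ, Finset.sum_sigma]
  rw [← Fin.sum_univ_eq_sum_range (fun ν => ∑ i ∈ Finset.range (iOrd m ν + 1), F ν i) (2*m+1)]
  exact Finset.sum_congr rfl (fun ν _ => Fin.sum_univ_eq_sum_range (fun i => F (ν:ℕ) i) _)

lemma card_sum_iOrd (m : ℕ) : ∑ ν ∈ Finset.range (2*m+1), (iOrd m ν + 1) = (m+1)^2 := by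
  induction m with
  | zero => simp [iOrd]
  | succ m ih =>
    have h1 : 2*(m+1)+1 = (2*m+1) + 1 + 1 := by omega
    rw [h1, Finset.sum_range_succ, Finset.sum_range_succ]
    have h2 : ∑ ν ∈ Finset.range (2*m+1), (iOrd (m+1) ν + 1)
        = ∑ ν ∈ Finset.range (2*m+1), ((iOrd m ν + 1) + 1) := by
      refine Finset.sum_congr rfl (fun ν hν => ?_)
      rw [Finset.mem_range] at hν
      have : iOrd (m+1) ν = iOrd m ν + 1 := by unfold iOrd; omega
      omega
    rw [h2, Finset.sum_add_distrib, ih, Finset.sum_const, Finset.card_range]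
    have h3 : iOrd (m+1) (2*m+1) = 0 := by unfold iOrd; omega
    have h4 : iOrd (m+1) (2*m+1+1) = 0 := by unfold iOrd; omega
    rw [h3, h4]
    ring

lemma card_RepJ (m : ℕ) : Fintype.card (RepJ m) = (m+1) * (m+1) := by
  rw [Fintype.card_sigma]
  simp only [Fintype.card_fin]
  rw [Fin.sum_univ_eq_sum_range (fun ν => iOrd m ν + 1) (2*m+1), card_sum_iOrd]
  ring

lemma phiF_li (m : ℕ) : LinearIndependent ℂ (phiF m) := by
  classical
  rw [Fintype.linearIndependent_iff]
  intro gco hsum j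
  set a : ℕ → ℕ → ℂ := fun ν i =>
    if h : ν < 2*m+1 ∧ i < iOrd m ν + 1 then gco ⟨⟨ν, h.1⟩, ⟨i, h.2⟩⟩ else 0 with haa
  have haj : ∀ j : RepJ m, a j.1 j.2 = gco j := by
    intro j
    simp only [haa]
    rw [dif_pos ⟨j.1.isLt, j.2.isLt⟩]
  have H : ∀ r ≤ m, ∀ c ≤ m, ∑ ν ∈ Finset.range (2*m+1), ∑ i ∈ Finset.range (iOrd m ν + 1),
      a ν i * (chiN m ν i r c : ℂ) = 0 := by
    intro r hr c hc
    have h1 : (∑ j : RepJ m, gco j • phiF m j) ⟨r, by omega⟩ ⟨c, by omega⟩ = 0 := by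
      rw [hsum]; rfl
    rw [Matrix.sum_apply] at h1
    rw [← sum_RepJ m (fun ν i => a ν i * (chiN m ν i r c : ℂ))]
    rw [← h1]
    refine Finset.sum_congr rfl (fun j _ => ?_)
    rw [haj j, Matrix.smul_apply, smul_eq_mul]
    rfl
  have hz := chi_inj m a H j.1 (by have := j.1.isLt; omega) j.2 (by have := j.2.isLt; omega)
  rw [← haj j]
  exact hz

noncomputable def repBasis (m : ℕ) : Module.Basis (RepJ m) ℂ (Matrix (Fin (m+1)) (Fin (m+1)) ℂ) :=
  basisOfLinearIndependentOfCardEqFinrank (phiF_li m)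
    (by rw [card_RepJ]; simp [Module.finrank_matrix])

lemma coe_repBasis (m : ℕ) : ⇑(repBasis m) = phiF m :=
  coe_basisOfLinearIndependentOfCardEqFinrank _ _


end RepAux

/-- Every `Q ∈ 𝔔_n` (`n = 2m+1`) admits a representation
`Q(x) = ∑_{ν=0}^{n-1} ∑_{i=0}^{i_ν} τ_{ν,i}(x) χ_{ν,i}` with all `τ_{ν,i} ∈ L¹(0,1)`,
and the coefficients `τ_{ν,i}` are determined almost everywhere by `Q`. -/
theorem rep_exists_unique_odd (m : ℕ) (hm : 1 ≤ m)
    (Q : ℕ → ℕ → ℝ → ℂ) (hQ : MemQO m Q) :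
    (∃ τ : ℕ → ℕ → ℝ → ℂ, RepO m Q τ) ∧
    (∀ τ τ' : ℕ → ℕ → ℝ → ℂ, RepO m Q τ → RepO m Q τ' →
      ∀ ν < 2*m+1, ∀ i ≤ iOrd m ν, τ ν i =ᵐ[μ01] τ' ν i) := by
  classical
  obtain ⟨hQ1, _hQ2⟩ := hQ
  set B := repBasis m with hBdef
  set Qmat : ℝ → Matrix (Fin (m+1)) (Fin (m+1)) ℂ :=
    fun x => Matrix.of (fun r c => Q r c x) with hQmat
  constructor
  · -- existence
    set τ : ℕ → ℕ → ℝ → ℂ := fun ν i x =>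
      if h : ν < 2*m+1 ∧ i < iOrd m ν + 1 then
        B.repr (Qmat x) ⟨⟨ν, h.1⟩, ⟨i, h.2⟩⟩ else 0 with hτ
    refine ⟨τ, ?_, ?_⟩
    · -- L¹
      intro ν hν i hi
      set j₀ : RepJ m := ⟨⟨ν, by omega⟩, ⟨i, by show i < iOrd m ν + 1; omega⟩⟩ with hj₀
      have hfun : τ ν i = fun x => ∑ r : Fin (m+1), ∑ c : Fin (m+1),
          Q r c x * B.repr (Matrix.single r c 1) j₀ := by
        funext x
        have h1 : τ ν i x = B.repr (Qmat x) j₀ := by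
          simp only [hτ]
          rw [dif_pos ⟨by omega, by omega⟩]
        rw [h1]
        conv_lhs => rw [Matrix.matrix_eq_sum_single (Qmat x)]
        rw [map_sum, Finsupp.finset_sum_apply]
        refine Finset.sum_congr rfl (fun r _ => ?_)
        rw [map_sum, Finsupp.finset_sum_apply]
        refine Finset.sum_congr rfl (fun c _ => ?_)
        have h2 : Matrix.single r c (Qmat x r c)
            = (Q r c x) • Matrix.single r c (1:ℂ) := by
          rw [Matrix.smul_single, smul_eq_mul, mul_one]
          rfl
        rw [h2, _root_.map_smul, Finsupp.smul_apply, smul_eq_mul]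
      rw [hfun]
      unfold MemL1
      refine MeasureTheory.integrable_finset_sum _ (fun r _ =>
        MeasureTheory.integrable_finset_sum _ (fun c _ => ?_))
      exact (hQ1 r c (by omega) (by omega)).mul_const _
    · -- a.e. representation (in fact everywhere)
      refine Filter.Eventually.of_forall (fun x => ?_)
      intro r hr c hc
      have hx := B.sum_repr (Qmat x)
      have h1 : (∑ j : RepJ m, B.repr (Qmat x) j • B j) ⟨r, by omega⟩ ⟨c, by omega⟩
          = Q r c x := by rw [hx]; rfl
      rw [Matrix.sum_apply] at h1
      rw [← h1, ← sum_RepJ m (fun ν i => τ ν i x * (chiN m ν i r c : ℂ))]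
      refine Finset.sum_congr rfl (fun j _ => ?_)
      have h2 : τ j.1 j.2 x = B.repr (Qmat x) j := by
        simp only [hτ]
        rw [dif_pos ⟨j.1.isLt, j.2.isLt⟩]
      rw [h2, Matrix.smul_apply, smul_eq_mul, coe_repBasis]
      rfl
  · -- uniqueness
    intro τ τ' h h' ν hν i hi
    filter_upwards [h.2, h'.2] with x hx hx'
    set a : ℕ → ℕ → ℂ := fun ν i => τ ν i x - τ' ν i x with ha
    have H : ∀ r ≤ m, ∀ c ≤ m, ∑ ν ∈ Finset.range (2*m+1),
        ∑ i ∈ Finset.range (iOrd m ν + 1), a ν i * (chiN m ν i r c : ℂ) = 0 := by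
      intro r hr c hc
      have e : ∑ ν ∈ Finset.range (2*m+1), ∑ i ∈ Finset.range (iOrd m ν + 1),
          a ν i * (chiN m ν i r c : ℂ)
          = (∑ ν ∈ Finset.range (2*m+1), ∑ i ∈ Finset.range (iOrd m ν + 1),
              τ ν i x * (chiN m ν i r c : ℂ))
            - ∑ ν ∈ Finset.range (2*m+1), ∑ i ∈ Finset.range (iOrd m ν + 1),
              τ' ν i x * (chiN m ν i r c : ℂ) := by
        rw [← Finset.sum_sub_distrib]
        refine Finset.sum_congr rfl (fun ν _ => ?_)
        rw [← Finset.sum_sub_distrib]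
        refine Finset.sum_congr rfl (fun i _ => ?_)
        rw [ha]
        ring
      rw [e, ← hx r hr c hc, ← hx' r hr c hc, sub_self]
    have hz := chi_inj m a H ν (by omega) i hi
    exact sub_eq_zero.mp hz
end
end
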